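/- arXiv:2312.06442 — 6 statements merged into one kernel-verified Lean document; each statement's English description precedes it below -/
import Mathlib

section
/- Let X and Y be real-valued random variables on a common probability space and assume Y has a density f_Y with ‖f_Y‖_{L∞} ≤ D. Then for every r > 0 and every realization of the sample (X_i, Y_i)_{i=1}^m, ‖F_{m,X} − F_X‖_{L∞} ≤ ‖F_{m,Y} − F_Y‖_{L∞} + ℙ(|X − Y| ≥ r) + ℙ_m(|X − Y| ≥ r) + 2rD. -/
open MeasureTheory Real Set

noncomputable section

/-- The empirical distribution function of the sample `xs`. -/
def empCDF {m : ℕ} (xs : Fin m → ℝ) (t : ℝ) : ℝ :=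
  ((Finset.univ.filter fun i => xs i ≤ t).card : ℝ) / m

/-- The distribution function of `h(X)` where `X ∼ μ`. -/
def cdfOf {𝒳 : Type*} [MeasurableSpace 𝒳] (μ : Measure 𝒳) (h : 𝒳 → ℝ) (t : ℝ) : ℝ :=
  (μ {x | h x ≤ t}).toReal

/-- The L²(μ) distance between two functions. -/
def L2dist {𝒳 : Type*} [MeasurableSpace 𝒳] (μ : Measure 𝒳) (h g : 𝒳 → ℝ) : ℝ :=
  Real.sqrt (∫ x, (h x - g x) ^ 2 ∂μ)

/-- An admissible sequence of subsets of `H`: `|T 0| = 1` and `|T s| ≤ 2^(2^s)` for `s ≥ 1`. -/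
def IsAdmissible {E : Type*} (H : Set E) (T : ℕ → Set E) : Prop :=
  (∀ s, T s ⊆ H) ∧ (∀ s, (T s).Finite) ∧ (∀ s, (T s).Nonempty) ∧
    (T 0).ncard = 1 ∧ ∀ s, 1 ≤ s → (T s).ncard ≤ 2 ^ 2 ^ s

/-- Talagrand's γ₁ functional of `H` with respect to the distance `dist`:
the infimum over admissible sequences of `sup_{h ∈ H} ∑_s 2^s · dist(h, T s)`
(the sum of the nonnegative series being expressed through its partial sums). -/
def gamma1 {E : Type*} (dist : E → E → ℝ) (H : Set E) : ℝ :=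
  sInf { r : ℝ | ∃ T : ℕ → Set E, IsAdmissible H T ∧
    ∀ h ∈ H, ∀ n : ℕ, ∑ s ∈ Finset.range n, (2 : ℝ) ^ s * sInf (dist h '' T s) ≤ r }

/-- Generalized inverse of a distribution function. -/
def quantileFn (F : ℝ → ℝ) (u : ℝ) : ℝ := sInf {t | u ≤ F t}

/-- Assumption (A): every `h ∈ H` has mean zero and variance one; increments have
subexponential tails with constant `L`; and each `h(X)` has a density bounded by `D`. -/
def AssumptionA {𝒳 : Type*} [MeasurableSpace 𝒳] (μ : Measure 𝒳) (H : Set (𝒳 → ℝ))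
    (L D : ℝ) : Prop :=
  (∀ h ∈ H, Measurable h) ∧
  (∀ h ∈ H, ∫ x, h x ∂μ = 0) ∧
  (∀ h ∈ H, ∫ x, (h x) ^ 2 ∂μ = 1) ∧
  (∀ h ∈ insert 0 H, ∀ g ∈ insert 0 H, ∀ t : ℝ, 0 < t →
    μ {x | t * L * L2dist μ h g ≤ |h x - g x|} ≤ ENNReal.ofReal (2 * Real.exp (-t))) ∧
  (∀ h ∈ H, ∃ f : ℝ → ℝ, (∀ t, 0 ≤ f t ∧ f t ≤ D) ∧
    Measure.map h μ = (volume : Measure ℝ).withDensity fun t => ENNReal.ofReal (f t))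

/-- **Lemma 3.1** (empirical stability): if `Y` has a density bounded by `D`, then for
every `r > 0` and every realization `(xs i, ys i)_{i<m}` of the sample `(X_i, Y_i)_{i≤m}`,
`‖F_{m,X} − F_X‖_∞ ≤ ‖F_{m,Y} − F_Y‖_∞ + ℙ(|X−Y| ≥ r) + ℙ_m(|X−Y| ≥ r) + 2rD`. -/
theorem empirical_cdf_stability {Ω : Type*} [MeasurableSpace Ω] (P : Measure Ω)
    [IsProbabilityMeasure P] (X Y : Ω → ℝ) (hX : Measurable X) (hY : Measurable Y)
    (D : ℝ) (fY : ℝ → ℝ) (hfY : ∀ t, 0 ≤ fY t ∧ fY t ≤ D)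
    (hmapY : Measure.map Y P = (volume : Measure ℝ).withDensity fun t => ENNReal.ofReal (fY t))
    (r : ℝ) (hr : 0 < r) (m : ℕ) (hm : 0 < m) (xs ys : Fin m → ℝ) :
    ∀ t : ℝ, |empCDF xs t - (P {ω | X ω ≤ t}).toReal| ≤
      (⨆ s : ℝ, |empCDF ys s - (P {ω | Y ω ≤ s}).toReal|) +
        (P {ω | r ≤ |X ω - Y ω|}).toReal +
        ((Finset.univ.filter fun i => r ≤ |xs i - ys i|).card : ℝ) / m + 2 * r * D := by
  
  have hD : 0 ≤ D := le_trans (hfY 0).1 (hfY 0).2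
  have hm' : (0:ℝ) < m := by exact_mod_cast hm
  intro t
  set S := ⨆ s : ℝ, |empCDF ys s - (P {ω | Y ω ≤ s}).toReal| with hS
  have hbdd : BddAbove (Set.range fun s : ℝ => |empCDF ys s - (P {ω | Y ω ≤ s}).toReal|) := by
    refine ⟨2, ?_⟩
    rintro _ ⟨s, rfl⟩
    have h1 : 0 ≤ empCDF ys s := div_nonneg (by positivity) (by positivity)
    have h2 : empCDF ys s ≤ 1 := by
      unfold empCDF
      rw [div_le_one hm']
      have := Finset.card_filter_le (Finset.univ : Finset (Fin m)) (fun i => ys i ≤ s)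
      simp only [Finset.card_univ, Fintype.card_fin] at this
      exact_mod_cast this
    have h3 : (P {ω | Y ω ≤ s}).toReal ≤ 1 := by
      have := prob_le_one (μ := P) (s := {ω | Y ω ≤ s})
      have h4 := ENNReal.toReal_mono (by simp) this
      simpa using h4
    have h4 : 0 ≤ (P {ω | Y ω ≤ s}).toReal := ENNReal.toReal_nonneg
    rw [abs_le]; constructor <;> linarith
  have hSle : ∀ s, |empCDF ys s - (P {ω | Y ω ≤ s}).toReal| ≤ S := fun s => le_ciSup hbdd s
  -- probability shift inequalities
  have toReal_add : ∀ {a b c : ENNReal}, a ≤ b + c → b ≠ ⊤ → c ≠ ⊤ → a.toReal ≤ b.toReal + c.toReal := by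
    intro a b c h hb hc
    have ha : a ≠ ⊤ := ne_top_of_le_ne_top (by simp [ENNReal.add_ne_top, hb, hc]) h
    rw [← ENNReal.toReal_add hb hc]
    exact ENNReal.toReal_mono (by simp [ENNReal.add_ne_top, hb, hc]) h
  have pX : (P {ω | X ω ≤ t}).toReal ≤ (P {ω | Y ω ≤ t + r}).toReal + (P {ω | r ≤ |X ω - Y ω|}).toReal := by
    refine toReal_add ?_ (measure_ne_top _ _) (measure_ne_top _ _)
    calc P {ω | X ω ≤ t} ≤ P ({ω | Y ω ≤ t + r} ∪ {ω | r ≤ |X ω - Y ω|}) := by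
          apply measure_mono
          intro ω hω
          by_cases h : r ≤ |X ω - Y ω|
          · exact Or.inr h
          · left
            have := abs_lt.mp (lt_of_not_ge h)
            simp only [Set.mem_setOf_eq] at hω ⊢
            linarith [this.1, this.2]
      _ ≤ _ := measure_union_le _ _
  have pY : (P {ω | Y ω ≤ t - r}).toReal ≤ (P {ω | X ω ≤ t}).toReal + (P {ω | r ≤ |X ω - Y ω|}).toReal := by
    refine toReal_add ?_ (measure_ne_top _ _) (measure_ne_top _ _)
    calc P {ω | Y ω ≤ t - r} ≤ P ({ω | X ω ≤ t} ∪ {ω | r ≤ |X ω - Y ω|}) := by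
          apply measure_mono
          intro ω hω
          by_cases h : r ≤ |X ω - Y ω|
          · exact Or.inr h
          · left
            have := abs_lt.mp (lt_of_not_ge h)
            simp only [Set.mem_setOf_eq] at hω ⊢
            linarith [this.1, this.2]
      _ ≤ _ := measure_union_le _ _
  -- density bound
  have hIoc : P {ω | Y ω ∈ Set.Ioc (t - r) (t + r)} ≤ ENNReal.ofReal (2 * r * D) := by
    have hpre : {ω | Y ω ∈ Set.Ioc (t - r) (t + r)} = Y ⁻¹' (Set.Ioc (t - r) (t + r)) := rfl
    rw [hpre, ← Measure.map_apply hY measurableSet_Ioc, hmapY,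
      withDensity_apply _ measurableSet_Ioc]
    calc ∫⁻ s in Set.Ioc (t - r) (t + r), ENNReal.ofReal (fY s)
        ≤ ∫⁻ _ in Set.Ioc (t - r) (t + r), ENNReal.ofReal D := by
          apply lintegral_mono
          intro s
          exact ENNReal.ofReal_le_ofReal (hfY s).2
      _ = ENNReal.ofReal D * volume (Set.Ioc (t - r) (t + r)) := by
          rw [setLIntegral_const]
      _ = ENNReal.ofReal (2 * r * D) := by
          rw [Real.volume_Ioc]
          rw [← ENNReal.ofReal_mul hD]
          ring_nf
  have hdens : (P {ω | Y ω ≤ t + r}).toReal ≤ (P {ω | Y ω ≤ t - r}).toReal + 2 * r * D := by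
    have hsub : P {ω | Y ω ≤ t + r} ≤ P {ω | Y ω ≤ t - r} + P {ω | Y ω ∈ Set.Ioc (t - r) (t + r)} := by
      calc P {ω | Y ω ≤ t + r} ≤ P ({ω | Y ω ≤ t - r} ∪ {ω | Y ω ∈ Set.Ioc (t - r) (t + r)}) := by
            apply measure_mono
            intro ω hω
            simp only [Set.mem_setOf_eq, Set.mem_union, Set.mem_Ioc] at hω ⊢
            by_cases h : Y ω ≤ t - r
            · exact Or.inl h
            · exact Or.inr ⟨lt_of_not_ge h, hω⟩
        _ ≤ _ := measure_union_le _ _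
    have h1 := toReal_add hsub (measure_ne_top _ _) (measure_ne_top _ _)
    have h2 : (P {ω | Y ω ∈ Set.Ioc (t - r) (t + r)}).toReal ≤ 2 * r * D := by
      have := ENNReal.toReal_mono (by simp) hIoc
      rwa [ENNReal.toReal_ofReal (by positivity)] at this
    linarith
  -- empirical inequalities
  have hcount : ∀ (as bs : Fin m → ℝ) (u v : ℝ), (∀ i, as i ≤ u → ¬ r ≤ |xs i - ys i| → bs i ≤ v) →
      empCDF as u ≤ empCDF bs v + ((Finset.univ.filter fun i => r ≤ |xs i - ys i|).card : ℝ) / m := by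
    intro as bs u v h
    unfold empCDF
    rw [← add_div, div_le_div_iff_of_pos_right hm']
    have hsub : (Finset.univ.filter fun i => as i ≤ u) ⊆
        (Finset.univ.filter fun i => bs i ≤ v) ∪ (Finset.univ.filter fun i => r ≤ |xs i - ys i|) := by
      intro i hi
      simp only [Finset.mem_filter, Finset.mem_union, Finset.mem_univ, true_and] at hi ⊢
      by_cases hc : r ≤ |xs i - ys i|
      · exact Or.inr hc
      · exact Or.inl (h i hi hc)
    calc ((Finset.univ.filter fun i => as i ≤ u).card : ℝ)
        ≤ (((Finset.univ.filter fun i => bs i ≤ v) ∪ (Finset.univ.filter fun i => r ≤ |xs i - ys i|)).card : ℝ) := by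
          exact_mod_cast Finset.card_le_card hsub
      _ ≤ _ := by exact_mod_cast Finset.card_union_le _ _
  have hemp1 : empCDF xs t ≤ empCDF ys (t + r) + ((Finset.univ.filter fun i => r ≤ |xs i - ys i|).card : ℝ) / m := by
    apply hcount
    intro i hi hc
    have := abs_lt.mp (lt_of_not_ge hc)
    linarith [this.1, this.2]
  have hemp2 : empCDF ys (t - r) ≤ empCDF xs t + ((Finset.univ.filter fun i => r ≤ |xs i - ys i|).card : ℝ) / m := by
    apply hcount
    intro i hi hc
    have := abs_lt.mp (lt_of_not_ge hc)
    linarith [this.1, this.2]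
  have hS1 := hSle (t + r)
  have hS2 := hSle (t - r)
  rw [abs_le] at hS1 hS2 ⊢
  constructor <;> linarith [hS1.1, hS1.2, hS2.1, hS2.2]
end
end

section
/- Let X and Y be real-valued random variables on a common probability space whose distribution functions F_X and F_Y are continuous and strictly increasing (hence invertible). Fix u ∈ (0,1) and r > 0, and set δ = ℙ(|X − Y| ≥ r). If δ < min{u, 1−u}, then F_X^{−1}(u) ≤ F_Y^{−1}(u + δ) + r. -/
open MeasureTheory Real Set

noncomputable section

open Filter Topology

lemma aux_bddBelow {F : ℝ → ℝ} (hF : Monotone F) (h0 : Tendsto F atBot (𝓝 0))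
    {a : ℝ} (ha : 0 < a) : BddBelow {t | a ≤ F t} := by
  obtain ⟨t0, ht0⟩ := (h0.eventually (eventually_lt_nhds ha)).exists
  exact ⟨t0, fun t ht => le_of_not_gt fun hlt =>
    absurd (le_trans ht (hF hlt.le)) (not_le.2 ht0)⟩

/-- Quantile shift estimate (equation (3.8)): if `δ = ℙ(|X − Y| ≥ r) < min{u, 1−u}`,
then `F_X⁻¹(u) ≤ F_Y⁻¹(u + δ) + r`. -/
theorem quantile_shift {Ω : Type*} [MeasurableSpace Ω] (P : Measure Ω)
    [IsProbabilityMeasure P] (X Y : Ω → ℝ) (hX : Measurable X) (hY : Measurable Y)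
    (hcX : Continuous fun t : ℝ => (P {ω | X ω ≤ t}).toReal)
    (hsX : StrictMono fun t : ℝ => (P {ω | X ω ≤ t}).toReal)
    (hcY : Continuous fun t : ℝ => (P {ω | Y ω ≤ t}).toReal)
    (hsY : StrictMono fun t : ℝ => (P {ω | Y ω ≤ t}).toReal)
    (u r : ℝ) (hu0 : 0 < u) (hu1 : u < 1) (hr : 0 < r)
    (hδ : (P {ω | r ≤ |X ω - Y ω|}).toReal < min u (1 - u)) :
    quantileFn (fun t : ℝ => (P {ω | X ω ≤ t}).toReal) u ≤
      quantileFn (fun t : ℝ => (P {ω | Y ω ≤ t}).toReal)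
        (u + (P {ω | r ≤ |X ω - Y ω|}).toReal) + r := by
  set δ := (P {ω | r ≤ |X ω - Y ω|}).toReal with hδdef
  have hδ0 : 0 ≤ δ := ENNReal.toReal_nonneg
  set FX := fun t : ℝ => (P {ω | X ω ≤ t}).toReal with hFXdef
  set FY := fun t : ℝ => (P {ω | Y ω ≤ t}).toReal with hFYdef
  have hmapX : IsProbabilityMeasure (P.map X) := Measure.isProbabilityMeasure_map hX.aemeasurable
  have hmapY : IsProbabilityMeasure (P.map Y) := Measure.isProbabilityMeasure_map hY.aemeasurable
  have hFXeq : FX = ProbabilityTheory.cdf (P.map X) := by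
    ext t
    rw [ProbabilityTheory.cdf_eq_real, measureReal_def, Measure.map_apply hX measurableSet_Iic]
    rfl
  have hFYeq : FY = ProbabilityTheory.cdf (P.map Y) := by
    ext t
    rw [ProbabilityTheory.cdf_eq_real, measureReal_def, Measure.map_apply hY measurableSet_Iic]
    rfl
  have hFXbot : Tendsto FX atBot (𝓝 0) := hFXeq ▸ ProbabilityTheory.tendsto_cdf_atBot _
  have hFYbot : Tendsto FY atBot (𝓝 0) := hFYeq ▸ ProbabilityTheory.tendsto_cdf_atBot _
  have hFYtop : Tendsto FY atTop (𝓝 1) := hFYeq ▸ ProbabilityTheory.tendsto_cdf_atTop _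
  have huδ1 : u + δ < 1 := by linarith [lt_of_lt_of_le hδ (min_le_right _ _)]
  have huδ0 : 0 < u + δ := by linarith
  set S := {t | u + δ ≤ FY t} with hSdef
  have hSne : S.Nonempty := by
    obtain ⟨t0, ht0⟩ := (hFYtop.eventually (eventually_gt_nhds huδ1)).exists
    exact ⟨t0, ht0.le⟩
  have hSbb : BddBelow S := aux_bddBelow hsY.monotone hFYbot huδ0
  have hSclosed : IsClosed S := IsClosed.preimage hcY isClosed_Ici
  set t0 := sInf S with ht0def
  have ht0mem : t0 ∈ S := hSclosed.csInf_mem hSne hSbb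
  have hkey : FY t0 ≤ FX (t0 + r) + δ := by
    have hsub : {ω | Y ω ≤ t0} ⊆ {ω | X ω ≤ t0 + r} ∪ {ω | r ≤ |X ω - Y ω|} := by
      intro ω hω
      by_cases h : r ≤ |X ω - Y ω|
      · exact Or.inr h
      · left
        have := abs_lt.mp (not_le.mp h)
        simp only [mem_setOf_eq] at hω ⊢
        linarith [this.2]
    calc FY t0 = (P {ω | Y ω ≤ t0}).toReal := rfl
      _ ≤ (P {ω | X ω ≤ t0 + r} + P {ω | r ≤ |X ω - Y ω|}).toReal := by
          apply ENNReal.toReal_mono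
          · exact ENNReal.add_ne_top.2 ⟨measure_ne_top _ _, measure_ne_top _ _⟩
          · exact (measure_mono hsub).trans (measure_union_le _ _)
      _ = FX (t0 + r) + δ := ENNReal.toReal_add (measure_ne_top _ _) (measure_ne_top _ _)
  have hmemX : t0 + r ∈ {t | u ≤ FX t} := by
    have : u + δ ≤ FX (t0 + r) + δ := le_trans ht0mem hkey
    simpa using this
  have hbbX : BddBelow {t | u ≤ FX t} := aux_bddBelow hsX.monotone hFXbot hu0
  exact csInf_le hbbX hmemX
end
end

section
/- Let X and Y be absolutely continuous real-valued random variables on a common probability space whose densities satisfy ‖f_X‖_{L∞} ≤ D and ‖f_Y‖_{L∞} ≤ D, and whose distribution functions F_X, F_Y are invertible. Then for every u ∈ (0,1) and every r > 0, ℙ( {X ≤ F_X^{−1}(u)} △ {Y ≤ F_Y^{−1}(u)} ) ≤ 4( ℙ(|X − Y| ≥ r) + rD ), where △ denotes the symmetric difference of events. -/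
open MeasureTheory Real Set

noncomputable section

section Aux
open Filter Topology
variable {Ω : Type*} [MeasurableSpace Ω]

lemma cdf_map_eq (P : Measure Ω) (X : Ω → ℝ) (hX : Measurable X) (t : ℝ) :
    P {ω | X ω ≤ t} = Measure.map X P (Iic t) := by
  rw [Measure.map_apply hX measurableSet_Iic]; rfl

lemma cdf_lipschitz (P : Measure Ω) [IsProbabilityMeasure P] (X : Ω → ℝ) (hX : Measurable X)
    (D : ℝ) (fX : ℝ → ℝ) (hfX : ∀ t, 0 ≤ fX t ∧ fX t ≤ D)
    (hmapX : Measure.map X P = (volume : Measure ℝ).withDensity fun t => ENNReal.ofReal (fX t))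
    {a b : ℝ} (hab : a ≤ b) :
    (P {ω | X ω ≤ b}).toReal ≤ (P {ω | X ω ≤ a}).toReal + (b - a) * D := by
  have hD : 0 ≤ D := le_trans (hfX 0).1 (hfX 0).2
  haveI := Measure.isProbabilityMeasure_map (μ := P) hX.aemeasurable
  have hIoc : Measure.map X P (Ioc a b) ≤ ENNReal.ofReal ((b - a) * D) := by
    rw [hmapX, withDensity_apply _ measurableSet_Ioc]
    calc ∫⁻ t in Ioc a b, ENNReal.ofReal (fX t)
        ≤ ∫⁻ _ in Ioc a b, ENNReal.ofReal D :=
          lintegral_mono fun t => ENNReal.ofReal_le_ofReal (hfX t).2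
      _ = ENNReal.ofReal D * volume (Ioc a b) := by
          rw [setLIntegral_const]
      _ = ENNReal.ofReal ((b - a) * D) := by
          rw [Real.volume_Ioc, ← ENNReal.ofReal_mul hD, mul_comm]
  have hsplit : Measure.map X P (Iic b) = Measure.map X P (Iic a) + Measure.map X P (Ioc a b) := by
    rw [← measure_union (Iic_disjoint_Ioc le_rfl) measurableSet_Ioc, Iic_union_Ioc_eq_Iic hab]
  rw [cdf_map_eq P X hX, cdf_map_eq P X hX, hsplit,
    ENNReal.toReal_add (measure_ne_top _ _) (measure_ne_top _ _)]
  have := ENNReal.toReal_le_of_le_ofReal (mul_nonneg (by linarith) hD) hIoc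
  linarith

lemma cdf_coupling (P : Measure Ω) [IsProbabilityMeasure P] (X Y : Ω → ℝ) (r : ℝ) (t : ℝ) :
    (P {ω | Y ω ≤ t}).toReal ≤
      (P {ω | X ω ≤ t + r}).toReal + (P {ω | r ≤ |X ω - Y ω|}).toReal := by
  have hsub : {ω | Y ω ≤ t} ⊆ {ω | X ω ≤ t + r} ∪ {ω | r ≤ |X ω - Y ω|} := by
    intro ω hω
    by_cases h : X ω ≤ t + r
    · exact Or.inl h
    · right
      push_neg at h
      simp only [mem_setOf_eq] at *
      have : r ≤ X ω - Y ω := by linarith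
      exact this.trans (le_abs_self _)
  calc (P {ω | Y ω ≤ t}).toReal
      ≤ (P ({ω | X ω ≤ t + r} ∪ {ω | r ≤ |X ω - Y ω|})).toReal :=
        ENNReal.toReal_mono (measure_ne_top _ _) (measure_mono hsub)
    _ ≤ (P {ω | X ω ≤ t + r}).toReal + (P {ω | r ≤ |X ω - Y ω|}).toReal := by
        rw [← ENNReal.toReal_add (measure_ne_top _ _) (measure_ne_top _ _)]
        exact ENNReal.toReal_mono
          (ENNReal.add_ne_top.mpr ⟨measure_ne_top _ _, measure_ne_top _ _⟩)
          (measure_union_le _ _)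

lemma quantile_apply_eq (F : ℝ → ℝ) (hmono : Monotone F) (hcont : Continuous F)
    (h0 : Tendsto F atBot (𝓝 0)) (h1 : Tendsto F atTop (𝓝 1))
    {u : ℝ} (hu0 : 0 < u) (hu1 : u < 1) : F (quantileFn F u) = u := by
  have hclosed : IsClosed {t | u ≤ F t} := isClosed_le continuous_const hcont
  have hne : {t | u ≤ F t}.Nonempty := by
    obtain ⟨t, ht⟩ := (h1.eventually (eventually_gt_nhds hu1)).exists
    exact ⟨t, ht.le⟩
  obtain ⟨t0, ht0⟩ := (h0.eventually (eventually_lt_nhds hu0)).exists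
  have hbdd : BddBelow {t | u ≤ F t} := by
    refine ⟨t0, fun t ht => ?_⟩
    by_contra hlt
    push_neg at hlt
    exact absurd (ht.trans (hmono hlt.le)) ht0.not_ge
  have hmem : quantileFn F u ∈ {t | u ≤ F t} := hclosed.csInf_mem hne hbdd
  refine le_antisymm ?_ hmem
  by_contra h
  push_neg at h
  have hev : ∀ᶠ t in 𝓝[<] (quantileFn F u), u < F t :=
    (hcont.continuousAt.eventually (eventually_gt_nhds h)).filter_mono nhdsWithin_le_nhds
  obtain ⟨t, htu, htq⟩ := (hev.and eventually_mem_nhdsWithin).exists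
  exact absurd (csInf_le hbdd htu.le) (not_le.mpr htq)

lemma cdf_tendsto_atTop (P : Measure Ω) [IsProbabilityMeasure P] (X : Ω → ℝ)
    (hX : Measurable X) :
    Tendsto (fun t : ℝ => (P {ω | X ω ≤ t}).toReal) atTop (𝓝 1) := by
  haveI := Measure.isProbabilityMeasure_map (μ := P) hX.aemeasurable
  have h := tendsto_measure_Iic_atTop (Measure.map X P)
  rw [measure_univ] at h
  have h2 := (ENNReal.tendsto_toReal ENNReal.one_ne_top).comp h
  simp only [Function.comp_def, ENNReal.toReal_one] at h2
  have heq : (fun t : ℝ => (P {ω | X ω ≤ t}).toReal)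
      = fun t : ℝ => (Measure.map X P (Iic t)).toReal := by
    funext t; rw [cdf_map_eq P X hX]
  rw [heq]
  exact h2

lemma cdf_tendsto_atBot (P : Measure Ω) [IsProbabilityMeasure P] (X : Ω → ℝ)
    (hX : Measurable X) :
    Tendsto (fun t : ℝ => (P {ω | X ω ≤ t}).toReal) atBot (𝓝 0) := by
  haveI := Measure.isProbabilityMeasure_map (μ := P) hX.aemeasurable
  set μ := Measure.map X P with hμ
  have h := tendsto_measure_Ici_atBot μ
  rw [measure_univ] at h
  have hlow : Tendsto (fun t : ℝ => (μ (Ici (t + 1))).toReal) atBot (𝓝 1) := by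
    have := (ENNReal.tendsto_toReal ENNReal.one_ne_top).comp
      (h.comp (tendsto_atBot_add_const_right atBot 1 tendsto_id))
    simpa only [Function.comp_def, id_eq, ENNReal.toReal_one] using this
  have hg : Tendsto (fun t : ℝ => (μ (Ioi t)).toReal) atBot (𝓝 1) := by
    refine tendsto_of_tendsto_of_tendsto_of_le_of_le hlow tendsto_const_nhds ?_ ?_
    · intro t
      exact ENNReal.toReal_mono (measure_ne_top _ _)
        (measure_mono fun x hx => lt_of_lt_of_le (by linarith : t < t + 1) hx)
    · intro t
      exact ENNReal.toReal_le_of_le_ofReal zero_le_one (by simpa using prob_le_one (μ := μ))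
  have hF : ∀ t : ℝ, (P {ω | X ω ≤ t}).toReal = 1 - (μ (Ioi t)).toReal := by
    intro t
    have hcompl := measure_add_measure_compl (μ := μ) (measurableSet_Iic (a := t))
    rw [measure_univ, compl_Iic] at hcompl
    have := congrArg ENNReal.toReal hcompl
    rw [ENNReal.toReal_add (measure_ne_top _ _) (measure_ne_top _ _), ENNReal.toReal_one] at this
    rw [cdf_map_eq P X hX, ← hμ]
    linarith
  have : Tendsto (fun t : ℝ => 1 - (μ (Ioi t)).toReal) atBot (𝓝 0) := by
    have := (tendsto_const_nhds (x := (1:ℝ)) (f := atBot)).sub hg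
    simpa using this
  simpa only [hF] using this

lemma continuous_of_mono_lip (F : ℝ → ℝ) (hm : Monotone F) (D : ℝ) (hD : 0 ≤ D)
    (h : ∀ a b : ℝ, a ≤ b → F b ≤ F a + (b - a) * D) : Continuous F := by
  have hlip : LipschitzWith D.toNNReal F := by
    apply LipschitzWith.of_dist_le_mul
    intro x y
    rw [Real.dist_eq, Real.dist_eq, Real.coe_toNNReal D hD]
    rcases le_total x y with hxy | hxy
    · rw [abs_of_nonpos (sub_nonpos.mpr (hm hxy)), abs_of_nonpos (sub_nonpos.mpr hxy)]
      nlinarith [h x y hxy]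
    · rw [abs_of_nonneg (sub_nonneg.mpr (hm hxy)), abs_of_nonneg (sub_nonneg.mpr hxy)]
      nlinarith [h y x hxy]
  exact hlip.continuous

lemma part_bound (P : Measure Ω) [IsProbabilityMeasure P] (X Y : Ω → ℝ) (hY : Measurable Y)
    (u r D qX qY : ℝ) (hr : 0 < r) (hD : 0 ≤ D)
    (hFX : (P {ω | X ω ≤ qX}).toReal = u)
    (hFY : (P {ω | Y ω ≤ qY}).toReal = u)
    (hLip : ∀ a b : ℝ, a ≤ b →
      (P {ω | X ω ≤ b}).toReal ≤ (P {ω | X ω ≤ a}).toReal + (b - a) * D)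
    (hCoup : ∀ t : ℝ, (P {ω | Y ω ≤ t}).toReal ≤
      (P {ω | X ω ≤ t + r}).toReal + (P {ω | r ≤ |X ω - Y ω|}).toReal) :
    (P ({ω | X ω ≤ qX} \ {ω | Y ω ≤ qY})).toReal ≤
      2 * ((P {ω | r ≤ |X ω - Y ω|}).toReal + r * D) := by
  set p := (P {ω | r ≤ |X ω - Y ω|}).toReal with hp
  have hp0 : 0 ≤ p := ENNReal.toReal_nonneg
  set M := max (qX + r) qY with hM
  set B := {ω | qY < Y ω ∧ Y ω ≤ qX + r} with hB
  have hsub : {ω | X ω ≤ qX} \ {ω | Y ω ≤ qY} ⊆ {ω | r ≤ |X ω - Y ω|} ∪ B := by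
    rintro ω ⟨hx, hy⟩
    simp only [mem_setOf_eq, not_le] at hx hy
    by_cases habs : r ≤ |X ω - Y ω|
    · exact Or.inl habs
    · right
      push_neg at habs
      have h2 := abs_lt.mp habs
      exact ⟨hy, by linarith [h2.1]⟩
  have step1 : (P ({ω | X ω ≤ qX} \ {ω | Y ω ≤ qY})).toReal ≤ p + (P B).toReal := by
    calc (P ({ω | X ω ≤ qX} \ {ω | Y ω ≤ qY})).toReal
        ≤ (P ({ω | r ≤ |X ω - Y ω|} ∪ B)).toReal :=
          ENNReal.toReal_mono (measure_ne_top _ _) (measure_mono hsub)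
      _ ≤ p + (P B).toReal := by
          rw [hp, ← ENNReal.toReal_add (measure_ne_top _ _) (measure_ne_top _ _)]
          exact ENNReal.toReal_mono
            (ENNReal.add_ne_top.mpr ⟨measure_ne_top _ _, measure_ne_top _ _⟩)
            (measure_union_le _ _)
  have hdisj : Disjoint B {ω | Y ω ≤ qY} := by
    rw [Set.disjoint_left]
    rintro ω ⟨h1, _⟩ h2
    exact absurd h2 (not_le.mpr h1)
  have hBle : P B + P {ω | Y ω ≤ qY} ≤ P {ω | Y ω ≤ M} := by
    rw [← measure_union hdisj (hY measurableSet_Iic)]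
    apply measure_mono
    rintro ω (h | h)
    · exact le_trans h.2 (le_max_left (qX + r) qY)
    · exact le_trans h (le_max_right (qX + r) qY)
  have step2 : (P B).toReal + u ≤ (P {ω | Y ω ≤ M}).toReal := by
    rw [← hFY, ← ENNReal.toReal_add (measure_ne_top _ _) (measure_ne_top _ _)]
    exact ENNReal.toReal_mono (measure_ne_top _ _) hBle
  have step3 : (P {ω | Y ω ≤ M}).toReal ≤ u + 2 * r * D + p := by
    rcases max_cases (qX + r) qY with ⟨hMe, _⟩ | ⟨hMe, _⟩
    · rw [hM, hMe]
      have h1 := hCoup (qX + r)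
      have h2 := hLip qX (qX + r + r) (by linarith)
      rw [hFX] at h2
      have h3 : (qX + r + r - qX) * D = 2 * r * D := by ring
      linarith
    · rw [hM, hMe, hFY]
      nlinarith [mul_nonneg (mul_nonneg (by norm_num : (0:ℝ) ≤ 2) hr.le) hD]
  linarith

end Aux

/-- **Lemma 3.3**: if `X` and `Y` have densities bounded by `D` and invertible
distribution functions, then for every `u ∈ (0,1)` and `r > 0`, the symmetric difference
of the level sets `{X ≤ F_X⁻¹(u)}` and `{Y ≤ F_Y⁻¹(u)}` has probability at most
`4(ℙ(|X − Y| ≥ r) + rD)`. -/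
theorem symmDiff_level_sets {Ω : Type*} [MeasurableSpace Ω] (P : Measure Ω)
    [IsProbabilityMeasure P] (X Y : Ω → ℝ) (hX : Measurable X) (hY : Measurable Y)
    (D : ℝ) (fX fY : ℝ → ℝ)
    (hfX : ∀ t, 0 ≤ fX t ∧ fX t ≤ D) (hfY : ∀ t, 0 ≤ fY t ∧ fY t ≤ D)
    (hmapX : Measure.map X P = (volume : Measure ℝ).withDensity fun t => ENNReal.ofReal (fX t))
    (hmapY : Measure.map Y P = (volume : Measure ℝ).withDensity fun t => ENNReal.ofReal (fY t))
    (hsX : StrictMono fun t : ℝ => (P {ω | X ω ≤ t}).toReal)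
    (hsY : StrictMono fun t : ℝ => (P {ω | Y ω ≤ t}).toReal)
    (u r : ℝ) (hu0 : 0 < u) (hu1 : u < 1) (hr : 0 < r) :
    (P (symmDiff
        {ω | X ω ≤ quantileFn (fun t : ℝ => (P {ω' | X ω' ≤ t}).toReal) u}
        {ω | Y ω ≤ quantileFn (fun t : ℝ => (P {ω' | Y ω' ≤ t}).toReal) u})).toReal ≤
      4 * ((P {ω | r ≤ |X ω - Y ω|}).toReal + r * D) := by
  have hD : 0 ≤ D := le_trans (hfX 0).1 (hfX 0).2
  set qX := quantileFn (fun t : ℝ => (P {ω' | X ω' ≤ t}).toReal) u with hqX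
  set qY := quantileFn (fun t : ℝ => (P {ω' | Y ω' ≤ t}).toReal) u with hqY
  have hlipX : ∀ a b : ℝ, a ≤ b →
      (P {ω | X ω ≤ b}).toReal ≤ (P {ω | X ω ≤ a}).toReal + (b - a) * D :=
    fun a b hab => cdf_lipschitz P X hX D fX hfX hmapX hab
  have hlipY : ∀ a b : ℝ, a ≤ b →
      (P {ω | Y ω ≤ b}).toReal ≤ (P {ω | Y ω ≤ a}).toReal + (b - a) * D :=
    fun a b hab => cdf_lipschitz P Y hY D fY hfY hmapY hab
  have hFXq : (P {ω | X ω ≤ qX}).toReal = u :=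
    quantile_apply_eq _ hsX.monotone
      (continuous_of_mono_lip _ hsX.monotone D hD hlipX)
      (cdf_tendsto_atBot P X hX) (cdf_tendsto_atTop P X hX) hu0 hu1
  have hFYq : (P {ω | Y ω ≤ qY}).toReal = u :=
    quantile_apply_eq _ hsY.monotone
      (continuous_of_mono_lip _ hsY.monotone D hD hlipY)
      (cdf_tendsto_atBot P Y hY) (cdf_tendsto_atTop P Y hY) hu0 hu1
  have habs : {ω | r ≤ |Y ω - X ω|} = {ω | r ≤ |X ω - Y ω|} := by
    ext ω; simp [abs_sub_comm]
  have h1 := part_bound P X Y hY u r D qX qY hr hD hFXq hFYq hlipX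
    (fun t => cdf_coupling P X Y r t)
  have h2 := part_bound P Y X hX u r D qY qX hr hD hFYq hFXq hlipY
    (fun t => cdf_coupling P Y X r t)
  rw [habs] at h2
  have hsd : symmDiff {ω | X ω ≤ qX} {ω | Y ω ≤ qY}
      = ({ω | X ω ≤ qX} \ {ω | Y ω ≤ qY}) ∪ ({ω | Y ω ≤ qY} \ {ω | X ω ≤ qX}) := by
    rw [Set.symmDiff_def]
  have step : (P (symmDiff {ω | X ω ≤ qX} {ω | Y ω ≤ qY})).toReal ≤
      (P ({ω | X ω ≤ qX} \ {ω | Y ω ≤ qY})).toReal +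
      (P ({ω | Y ω ≤ qY} \ {ω | X ω ≤ qX})).toReal := by
    rw [hsd, ← ENNReal.toReal_add (measure_ne_top _ _) (measure_ne_top _ _)]
    exact ENNReal.toReal_mono
      (ENNReal.add_ne_top.mpr ⟨measure_ne_top _ _, measure_ne_top _ _⟩)
      (measure_union_le _ _)
  linarith
end
end

section
/- Let (𝒳, μ) be a probability space, X distributed as μ, and X₁,…,X_m independent copies of X. Let h, h′ be real-valued measurable functions on 𝒳 whose distribution functions F_h, F_{h′} are continuous and strictly increasing, and fix u ∈ (0,1) and t ≥ 0. Then with probability at least 1 − 2exp(−t), |F_{m,h}(F_h^{−1}(u)) − F_{m,h′}(F_{h′}^{−1}(u))| ≤ 2( t/m + √( (t/m) · ℙ(S^u[h,h′]) ) ). -/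
open MeasureTheory Real Set

noncomputable section

lemma cdf_quantile {𝒳 : Type*} [MeasurableSpace 𝒳] (μ : Measure 𝒳) [IsProbabilityMeasure μ]
    (h : 𝒳 → ℝ) (hh : Measurable h) (hc : Continuous (cdfOf μ h)) (hs : StrictMono (cdfOf μ h))
    {u : ℝ} (hu0 : 0 < u) (hu1 : u < 1) : cdfOf μ h (quantileFn (cdfOf μ h) u) = u := by
  have hmap : IsProbabilityMeasure (μ.map h) := Measure.isProbabilityMeasure_map hh.aemeasurable
  have hFeq : cdfOf μ h = fun x => ProbabilityTheory.cdf (μ.map h) x := by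
    funext x
    rw [ProbabilityTheory.cdf_eq_real, measureReal_def, Measure.map_apply hh measurableSet_Iic]
    rfl
  have hbot : Filter.Tendsto (cdfOf μ h) Filter.atBot (nhds 0) := by
    rw [hFeq]; exact ProbabilityTheory.tendsto_cdf_atBot (μ.map h)
  have htop : Filter.Tendsto (cdfOf μ h) Filter.atTop (nhds 1) := by
    rw [hFeq]; exact ProbabilityTheory.tendsto_cdf_atTop (μ.map h)
  obtain ⟨b, hb⟩ := (htop.eventually (eventually_gt_nhds hu1)).exists
  obtain ⟨a, ha⟩ := (hbot.eventually (eventually_lt_nhds hu0)).exists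
  have hab : a < b := hs.lt_iff_lt.mp (ha.trans hb)
  obtain ⟨t₀, _, ht₀⟩ := intermediate_value_Icc hab.le hc.continuousOn ⟨ha.le, hb.le⟩
  have hset : {x | u ≤ cdfOf μ h x} = Ici t₀ := by
    ext x
    simp only [mem_setOf_eq, mem_Ici, ← ht₀]
    exact hs.le_iff_le
  rw [quantileFn, hset, csInf_Ici, ht₀]

lemma cosh_bound (c : ℝ) (hc : |c| ≤ 1) : Real.exp c + Real.exp (-c) - 2 ≤ 2 * c ^ 2 := by
  have h1 := Real.exp_bound hc (n := 2) (by norm_num)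
  have h2 := Real.exp_bound (x := -c) (by rwa [abs_neg]) (n := 2) (by norm_num)
  simp only [Finset.sum_range_succ, Finset.sum_range_zero] at h1 h2
  norm_num at h1 h2
  rw [abs_le] at h1 h2
  nlinarith [sq_nonneg c, h1.2, h2.2]

lemma mgf_single {𝒳 : Type*} [MeasurableSpace 𝒳] (μ : Measure 𝒳) [IsProbabilityMeasure μ]
    {A B : Set 𝒳} (hA : MeasurableSet A) (hB : MeasurableSet B) (hd : μ (A \ B) = μ (B \ A))
    (c : ℝ) (hc : |c| ≤ 1) :
    ∫ x, Real.exp (c * (A.indicator (fun _ => (1:ℝ)) x - B.indicator (fun _ => (1:ℝ)) x)) ∂μ ≤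
      Real.exp ((μ (symmDiff A B)).toReal * c ^ 2) := by
  have hpt : ∀ x, Real.exp (c * (A.indicator (fun _ => (1:ℝ)) x - B.indicator (fun _ => (1:ℝ)) x)) =
      1 + (A \ B).indicator (fun _ => Real.exp c - 1) x
        + (B \ A).indicator (fun _ => Real.exp (-c) - 1) x := by
    intro x
    by_cases hxA : x ∈ A <;> by_cases hxB : x ∈ B <;>
      simp [indicator_apply, hxA, hxB, mem_diff]
  simp only [hpt]
  have hIA : ∫ x, (A \ B).indicator (fun _ => Real.exp c - 1) x ∂μ
      = (μ (A \ B)).toReal * (Real.exp c - 1) := by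
    rw [integral_indicator_const _ (hA.diff hB)]; simp [smul_eq_mul, mul_comm, measureReal_def]
  have hIB : ∫ x, (B \ A).indicator (fun _ => Real.exp (-c) - 1) x ∂μ
      = (μ (B \ A)).toReal * (Real.exp (-c) - 1) := by
    rw [integral_indicator_const _ (hB.diff hA)]; simp [smul_eq_mul, mul_comm, measureReal_def]
  have int1 : Integrable (fun x => (A \ B).indicator (fun _ => Real.exp c - 1) x) μ :=
    (integrable_const _).indicator (hA.diff hB)
  have int2 : Integrable (fun x => (B \ A).indicator (fun _ => Real.exp (-c) - 1) x) μ :=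
    (integrable_const _).indicator (hB.diff hA)
  have intsum : Integrable (fun x => 1 + (A \ B).indicator (fun _ => Real.exp c - 1) x) μ :=
    (integrable_const (1:ℝ)).add int1
  rw [integral_add intsum int2, integral_add (integrable_const (1:ℝ)) int1, integral_const,
    hIA, hIB]
  simp only [measureReal_def, measure_univ, ENNReal.toReal_one, smul_eq_mul, mul_one, one_mul]
  have hsd : μ (symmDiff A B) = μ (A \ B) + μ (B \ A) := by
    rw [Set.symmDiff_def]
    exact measure_union (disjoint_sdiff_sdiff) (hB.diff hA)
  set pa := (μ (A \ B)).toReal with hpa_def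
  have hpb : (μ (B \ A)).toReal = pa := by rw [hpa_def, hd]
  have hp : (μ (symmDiff A B)).toReal = pa + pa := by
    rw [hsd, ENNReal.toReal_add (measure_ne_top _ _) (measure_ne_top _ _), hpa_def, hd]
  have hpa0 : 0 ≤ pa := ENNReal.toReal_nonneg
  rw [hpb, hp]
  have hch := cosh_bound c hc
  have hexp := Real.add_one_le_exp ((pa + pa) * c ^ 2)
  nlinarith

lemma empCDF_eq_sum {𝒳 : Type*} (m : ℕ) (h : 𝒳 → ℝ) (q : ℝ) (ω : Fin m → 𝒳) :
    empCDF (fun i => h (ω i)) q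
      = (∑ i, ({x | h x ≤ q}).indicator (fun _ => (1:ℝ)) (ω i)) / m := by
  unfold empCDF
  congr 1
  rw [← Finset.sum_boole]
  exact Finset.sum_congr rfl fun i _ => by simp [indicator_apply, mem_setOf_eq]

lemma tail_bound {𝒳 : Type*} [MeasurableSpace 𝒳] (μ : Measure 𝒳) [IsProbabilityMeasure μ]
    (m : ℕ) (Z : 𝒳 → ℝ) (hZmeas : Measurable Z) (hZbd : ∀ x, |Z x| ≤ 1)
    (lam a K : ℝ) (hlam : 0 ≤ lam) (hK : ∫ x, Real.exp (lam * Z x) ∂μ ≤ Real.exp K) :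
    (Measure.pi fun _ : Fin m => μ) {ω | a ≤ ∑ i, Z (ω i)} ≤
      ENNReal.ofReal (Real.exp (-lam * a + m * K)) := by
  letI : MeasureSpace 𝒳 := ⟨μ⟩
  set Pm : Measure (Fin m → 𝒳) := Measure.pi fun _ : Fin m => μ with hPm
  haveI : IsProbabilityMeasure Pm := by rw [hPm]; infer_instance
  set S : (Fin m → 𝒳) → ℝ := fun ω => ∑ i, Z (ω i) with hS
  have hSmeas : Measurable S := Finset.measurable_sum _ fun i _ => hZmeas.comp (measurable_pi_apply i)
  have hSbd : ∀ ω, |S ω| ≤ m := fun ω =>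
    (Finset.abs_sum_le_sum_abs _ _).trans <| by
      calc ∑ i, |Z (ω i)| ≤ ∑ _i : Fin m, (1:ℝ) := Finset.sum_le_sum fun i _ => hZbd (ω i)
      _ = m := by simp
  have hint : Integrable (fun ω => Real.exp (lam * S ω)) Pm := by
    refine (integrable_const (Real.exp (lam * m))).mono'
      ((Real.continuous_exp.measurable.comp (hSmeas.const_mul lam)).aestronglyMeasurable)
      (Filter.Eventually.of_forall fun ω => ?_)
    rw [Real.norm_eq_abs, Real.abs_exp, Real.exp_le_exp]
    calc lam * S ω ≤ lam * |S ω| := by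
          exact mul_le_mul_of_nonneg_left (le_abs_self _) hlam
      _ ≤ lam * m := mul_le_mul_of_nonneg_left (hSbd ω) hlam
  have hmgf : ProbabilityTheory.mgf S Pm lam = (∫ x, Real.exp (lam * Z x) ∂μ) ^ m := by
    rw [ProbabilityTheory.mgf]
    have : ∀ ω : Fin m → 𝒳, Real.exp (lam * S ω) = ∏ i, Real.exp (lam * Z (ω i)) := by
      intro ω
      rw [hS]
      simp only [Finset.mul_sum, Real.exp_sum]
    simp only [this]
    have hvol : Pm = (volume : Measure (Fin m → 𝒳)) := by
      rw [hPm, MeasureTheory.volume_pi]; rfl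
    rw [hvol]
    rw [MeasureTheory.volume_pi, MeasureTheory.integral_fintype_prod_eq_pow (ι := Fin m) (fun x => Real.exp (lam * Z x))]
    simp only [Fintype.card_fin]
    rfl
  have hcher := ProbabilityTheory.measure_ge_le_exp_mul_mgf (μ := Pm) (X := S) a hlam hint
  have hfin : Pm {ω | a ≤ S ω} ≠ ⊤ := measure_ne_top _ _
  rw [ENNReal.le_ofReal_iff_toReal_le hfin (Real.exp_pos _).le]
  refine hcher.trans ?_
  rw [Real.exp_add]
  have hbase : 0 ≤ ∫ x, Real.exp (lam * Z x) ∂μ := integral_nonneg fun x => (Real.exp_pos _).le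
  have : (∫ x, Real.exp (lam * Z x) ∂μ) ^ m ≤ Real.exp (m * K) := by
    rw [Real.exp_nat_mul]
    exact pow_le_pow_left₀ hbase hK m
  rw [hmgf]
  exact mul_le_mul_of_nonneg_left this (Real.exp_pos _).le


/-- **Lemma 3.6** (the increment/link bound): for functions `h, h'` with continuous and
strictly increasing distribution functions, every `u ∈ (0,1)` and `t ≥ 0`, with
probability at least `1 − 2exp(−t)`,
`|F_{m,h}(F_h⁻¹(u)) − F_{m,h'}(F_{h'}⁻¹(u))| ≤ 2(t/m + √((t/m)·ℙ(S^u[h,h'])))`. -/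
theorem increment_bound {𝒳 : Type*} [MeasurableSpace 𝒳] (μ : Measure 𝒳)
    [IsProbabilityMeasure μ] (m : ℕ) (hm : 0 < m) (h h' : 𝒳 → ℝ)
    (hh : Measurable h) (hh' : Measurable h')
    (hch : Continuous (cdfOf μ h)) (hsh : StrictMono (cdfOf μ h))
    (hch' : Continuous (cdfOf μ h')) (hsh' : StrictMono (cdfOf μ h'))
    (u : ℝ) (hu0 : 0 < u) (hu1 : u < 1) (t : ℝ) (ht : 0 ≤ t) :
    ENNReal.ofReal (1 - 2 * Real.exp (-t)) ≤
      (Measure.pi fun _ : Fin m => μ)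
        {ω | |empCDF (fun i => h (ω i)) (quantileFn (cdfOf μ h) u) -
               empCDF (fun i => h' (ω i)) (quantileFn (cdfOf μ h') u)| ≤
          2 * (t / m + Real.sqrt (t / m *
            (μ (symmDiff {x | h x ≤ quantileFn (cdfOf μ h) u}
                         {x | h' x ≤ quantileFn (cdfOf μ h') u})).toReal))} := by
  classical
  set q : ℝ := quantileFn (cdfOf μ h) u with hq_def
  set q' : ℝ := quantileFn (cdfOf μ h') u with hq'_def
  set A : Set 𝒳 := {x | h x ≤ q} with hA_def
  set B : Set 𝒳 := {x | h' x ≤ q'} with hB_def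
  have hA : MeasurableSet A := measurableSet_le hh measurable_const
  have hB : MeasurableSet B := measurableSet_le hh' measurable_const
  have hμA : (μ A).toReal = u := cdf_quantile μ h hh hch hsh hu0 hu1
  have hμB : (μ B).toReal = u := cdf_quantile μ h' hh' hch' hsh' hu0 hu1
  have hABmeas : μ A = μ B :=
    (ENNReal.toReal_eq_toReal_iff' (measure_ne_top _ _) (measure_ne_top _ _)).mp
      (hμA.trans hμB.symm)
  have hdiffAB : μ (A \ B) = μ (B \ A) := by
    have h1 : μ (A ∩ B) + μ (A \ B) = μ A := measure_inter_add_diff A hB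
    have h2 : μ (B ∩ A) + μ (B \ A) = μ B := measure_inter_add_diff B hA
    rw [Set.inter_comm] at h2
    have h3 : μ (A ∩ B) + μ (A \ B) = μ (A ∩ B) + μ (B \ A) := by rw [h1, h2, hABmeas]
    exact (ENNReal.add_right_inj (measure_ne_top _ _)).mp h3
  set p : ℝ := (μ (symmDiff A B)).toReal with hp_def
  have hp0 : 0 ≤ p := ENNReal.toReal_nonneg
  rcases le_or_gt (1 - 2 * Real.exp (-t)) 0 with hT | hT
  · rw [ENNReal.ofReal_eq_zero.mpr hT]; exact zero_le
  have ht0 : 0 < t := by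
    by_contra hcon
    push_neg at hcon
    have : t = 0 := le_antisymm hcon ht
    rw [this] at hT
    norm_num [Real.exp_zero] at hT
  have hm0 : (0:ℝ) < m := Nat.cast_pos.mpr hm
  set Z : 𝒳 → ℝ := fun x =>
    A.indicator (fun _ => (1:ℝ)) x - B.indicator (fun _ => (1:ℝ)) x with hZ_def
  have hZmeas : Measurable Z :=
    (measurable_const.indicator hA).sub (measurable_const.indicator hB)
  have hZbd : ∀ x, |Z x| ≤ 1 := by
    intro x
    rw [hZ_def]
    by_cases hxA : x ∈ A <;> by_cases hxB : x ∈ B <;>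
      simp [indicator_apply, hxA, hxB]
  -- key identity
  have hkey : ∀ ω : Fin m → 𝒳,
      empCDF (fun i => h (ω i)) q - empCDF (fun i => h' (ω i)) q'
        = (∑ i, Z (ω i)) / m := by
    intro ω
    rw [empCDF_eq_sum, empCDF_eq_sum, div_sub_div_same, ← Finset.sum_sub_distrib]
  set R : ℝ := 2 * (t / (m:ℝ) + Real.sqrt (t / (m:ℝ) * p)) with hR_def
  set a : ℝ := 2 * t + 2 * Real.sqrt (t * m * p) with ha_def
  have hmR : (m : ℝ) * R = a := by
    rw [hR_def, ha_def]
    have hsq : (m:ℝ) * Real.sqrt (t / m * p) = Real.sqrt (t * m * p) := by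
      rw [show t * (m:ℝ) * p = (m:ℝ)^2 * (t / m * p) by field_simp]
      rw [Real.sqrt_mul (sq_nonneg _), Real.sqrt_sq hm0.le]
    have hexpand : (m:ℝ) * (2 * (t / m + Real.sqrt (t / m * p)))
        = 2 * t + 2 * ((m:ℝ) * Real.sqrt (t / m * p)) := by
      field_simp
    rw [hexpand, hsq]
  set lam : ℝ := if (m:ℝ) * p ≤ t then 1 else Real.sqrt (t / ((m:ℝ) * p)) with hlam_def
  have hmp0 : 0 ≤ (m:ℝ) * p := by positivity
  have hlam0 : 0 ≤ lam := by
    rw [hlam_def]; split_ifs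
    · norm_num
    · exact Real.sqrt_nonneg _
  have hlam1 : lam ≤ 1 := by
    rw [hlam_def]; split_ifs with hc
    · exact le_refl 1
    · push_neg at hc
      have hmp : 0 < (m:ℝ) * p := lt_of_le_of_lt ht hc
      exact Real.sqrt_le_one.mpr ((div_le_one hmp).mpr hc.le)
  have hexp_le : -lam * a + (m:ℝ) * (p * lam ^ 2) ≤ -t := by
    rw [hlam_def, ha_def]
    split_ifs with hc
    · have hs0 : 0 ≤ Real.sqrt (t * m * p) := Real.sqrt_nonneg _
      nlinarith
    · push_neg at hc
      have hmp : 0 < (m:ℝ) * p := lt_of_le_of_lt ht hc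
      have hl2 : Real.sqrt (t / ((m:ℝ) * p)) ^ 2 = t / ((m:ℝ) * p) :=
        Real.sq_sqrt (by positivity)
      have hls : Real.sqrt (t / ((m:ℝ) * p)) * Real.sqrt (t * m * p) = t := by
        rw [← Real.sqrt_mul (by positivity)]
        rw [show t / ((m:ℝ) * p) * (t * m * p) = t ^ 2 by field_simp [right_ne_zero_of_mul hmp.ne']]
        exact Real.sqrt_sq ht
      have hmpl : (m:ℝ) * (p * Real.sqrt (t / ((m:ℝ) * p)) ^ 2) = t := by
        rw [hl2]; field_simp [right_ne_zero_of_mul hmp.ne']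
      rw [hmpl]
      have hs0 : 0 ≤ Real.sqrt (t / ((m:ℝ) * p)) := Real.sqrt_nonneg _
      nlinarith
  have hsingle : ∀ c : ℝ, |c| ≤ 1 → ∫ x, Real.exp (c * Z x) ∂μ ≤ Real.exp (p * c ^ 2) := by
    intro c hc
    rw [hp_def]
    simpa only [hZ_def] using mgf_single μ hA hB hdiffAB c hc
  have habs_lam : |lam| ≤ 1 := by rwa [abs_of_nonneg hlam0]
  have tail1 : (Measure.pi fun _ : Fin m => μ) {ω | a ≤ ∑ i, Z (ω i)} ≤
      ENNReal.ofReal (Real.exp (-t)) := by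
    refine (tail_bound μ m Z hZmeas hZbd lam a (p * lam ^ 2) hlam0
      (hsingle lam habs_lam)).trans ?_
    exact ENNReal.ofReal_le_ofReal (Real.exp_le_exp.mpr hexp_le)
  have tail2 : (Measure.pi fun _ : Fin m => μ) {ω | a ≤ ∑ i, -Z (ω i)} ≤
      ENNReal.ofReal (Real.exp (-t)) := by
    have hbd : ∀ x, |-Z x| ≤ 1 := fun x => by rw [abs_neg]; exact hZbd x
    have hK : ∫ x, Real.exp (lam * -Z x) ∂μ ≤ Real.exp (p * lam ^ 2) := by
      have := hsingle (-lam) (by rwa [abs_neg])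
      simpa [neg_mul, mul_neg, neg_sq] using this
    refine (tail_bound μ m (fun x => -Z x) hZmeas.neg hbd lam a (p * lam ^ 2) hlam0 hK).trans ?_
    exact ENNReal.ofReal_le_ofReal (Real.exp_le_exp.mpr hexp_le)
  set Pm : Measure (Fin m → 𝒳) := Measure.pi fun _ : Fin m => μ with hPm
  haveI : IsProbabilityMeasure Pm := by rw [hPm]; infer_instance
  set E : Set (Fin m → 𝒳) := {ω | |empCDF (fun i => h (ω i)) q -
      empCDF (fun i => h' (ω i)) q'| ≤ R} with hE_def
  show ENNReal.ofReal (1 - 2 * Real.exp (-t)) ≤ Pm E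
  have hsub : Eᶜ ⊆ {ω | a ≤ ∑ i, Z (ω i)} ∪ {ω | a ≤ ∑ i, -Z (ω i)} := by
    intro ω hω
    rw [hE_def] at hω
    simp only [mem_compl_iff, mem_setOf_eq, not_le] at hω
    rw [hkey ω] at hω
    have habs : a < |∑ i, Z (ω i)| := by
      have h1 : (m:ℝ) * R < (m:ℝ) * |(∑ i, Z (ω i)) / m| :=
        mul_lt_mul_of_pos_left hω hm0
      rw [abs_div, abs_of_pos hm0, mul_div_cancel₀ _ (ne_of_gt hm0)] at h1
      rwa [hmR] at h1
    rcases lt_abs.mp habs with h1 | h2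
    · exact Or.inl (le_of_lt h1)
    · refine Or.inr ?_
      simp only [mem_setOf_eq, Finset.sum_neg_distrib]
      exact le_of_lt h2
  have hcompl : Pm Eᶜ ≤ ENNReal.ofReal (2 * Real.exp (-t)) := by
    refine (measure_mono hsub).trans ((measure_union_le _ _).trans ?_)
    rw [show (2:ℝ) * Real.exp (-t) = Real.exp (-t) + Real.exp (-t) by ring,
      ENNReal.ofReal_add (Real.exp_pos _).le (Real.exp_pos _).le]
    exact add_le_add tail1 tail2
  have huniv : (1:ENNReal) ≤ Pm E + Pm Eᶜ := by
    have := measure_union_le (μ := Pm) E Eᶜ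
    rwa [Set.union_compl_self, measure_univ] at this
  rw [ENNReal.ofReal_sub _ (by positivity), ENNReal.ofReal_one, tsub_le_iff_right]
  calc (1:ENNReal) ≤ Pm E + Pm Eᶜ := huniv
    _ ≤ Pm E + ENNReal.ofReal (2 * Real.exp (-t)) := add_le_add_right hcompl _
end
end

section
/- Let Δ ∈ (0, 1/10], let m ≥ 1, and let s ≥ 0 be an integer with 2^s ≤ √Δ · m. Then for every δ ∈ (0, 2], (2^s/m) · δ · log(e/δ) ≤ 2( Δ² + (2^s/m) · δ · log(e/Δ) ). -/
open Real

lemma key_xlog (x A : ℝ) (hx : 0 < x) (hA : 0 < A) :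
    x * Real.log (A / x) ≤ A / Real.exp 1 := by
  have he : (0:ℝ) < Real.exp 1 := Real.exp_pos 1
  have h1 : Real.log (A / x) = Real.log (A / (Real.exp 1 * x)) + 1 := by
    rw [Real.log_div hA.ne' hx.ne', Real.log_div hA.ne' (by positivity),
      Real.log_mul he.ne' hx.ne', Real.log_exp]
    ring
  have h2 : Real.log (A / (Real.exp 1 * x)) ≤ A / (Real.exp 1 * x) - 1 :=
    Real.log_le_sub_one_of_pos (by positivity)
  rw [h1]
  have h3 : x * (A / (Real.exp 1 * x) - 1 + 1) = A / Real.exp 1 := by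
    field_simp
    ring
  nlinarith [h3]

/-- **Lemma 3.8** (a simple computation): for `Δ ∈ (0, 1/10]`, `m ≥ 1` and `s` with
`2^s ≤ √Δ·m`, every `δ ∈ (0,2]` satisfies
`(2^s/m)·δ·log(e/δ) ≤ 2(Δ² + (2^s/m)·δ·log(e/Δ))`. -/
theorem simple_computation (Δ : ℝ) (hΔ0 : 0 < Δ) (hΔ : Δ ≤ 1 / 10) (m : ℕ) (hm : 1 ≤ m)
    (s : ℕ) (hs : (2 : ℝ) ^ s ≤ Real.sqrt Δ * m) (δ : ℝ) (hδ0 : 0 < δ) (hδ2 : δ ≤ 2) :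
    (2 : ℝ) ^ s / m * δ * Real.log (Real.exp 1 / δ) ≤
      2 * (Δ ^ 2 + (2 : ℝ) ^ s / m * δ * Real.log (Real.exp 1 / Δ)) := by
  have hm0 : (0:ℝ) < m := by exact_mod_cast hm
  have he : (0:ℝ) < Real.exp 1 := Real.exp_pos 1
  set c : ℝ := (2:ℝ) ^ s / m with hc_def
  have hc0 : 0 < c := by positivity
  have hcΔ : c ≤ Real.sqrt Δ := by
    rw [hc_def, div_le_iff₀ hm0]; exact hs
  have hsqrt1 : Real.sqrt Δ ≤ 1 := by
    rw [show (1:ℝ) = Real.sqrt 1 by simp]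
    exact Real.sqrt_le_sqrt (by linarith)
  have hc1 : c ≤ 1 := hcΔ.trans hsqrt1
  -- split the log
  have hsplit : Real.log (Real.exp 1 / δ) =
      2 * Real.log (Real.exp 1 / Δ) + Real.log (Δ ^ 2 / Real.exp 1 / δ) := by
    rw [Real.log_div he.ne' hδ0.ne', Real.log_div he.ne' hΔ0.ne',
      Real.log_div (by positivity : (Δ ^ 2 / Real.exp 1 : ℝ) ≠ 0) hδ0.ne',
      Real.log_div (by positivity : (Δ ^ 2 : ℝ) ≠ 0) he.ne', Real.log_exp, Real.log_pow]
    push_cast; ring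
  have hkey : δ * Real.log (Δ ^ 2 / Real.exp 1 / δ) ≤ Δ ^ 2 / Real.exp 1 / Real.exp 1 :=
    key_xlog δ (Δ ^ 2 / Real.exp 1) hδ0 (by positivity)
  have he1 : (1:ℝ) ≤ Real.exp 1 := by
    nlinarith [Real.add_one_le_exp (1:ℝ)]
  have hbound : Δ ^ 2 / Real.exp 1 / Real.exp 1 ≤ Δ ^ 2 := by
    rw [div_div]
    rw [div_le_iff₀ (by positivity)]
    nlinarith [sq_nonneg Δ, mul_le_mul he1 he1 (by norm_num : (0:ℝ) ≤ 1) he.le]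
  rw [hsplit]
  -- need: c*δ*(2L + K) ≤ 2Δ² + 2 c δ L, i.e. c*(δ*K) ≤ 2Δ²
  have hK : c * (δ * Real.log (Δ ^ 2 / Real.exp 1 / δ)) ≤ Δ ^ 2 := by
    rcases le_or_gt 0 (δ * Real.log (Δ ^ 2 / Real.exp 1 / δ)) with h | h
    · calc c * (δ * Real.log (Δ ^ 2 / Real.exp 1 / δ)) ≤ 1 * (δ * Real.log (Δ ^ 2 / Real.exp 1 / δ)) := by
            apply mul_le_mul_of_nonneg_right hc1 h
      _ = δ * Real.log (Δ ^ 2 / Real.exp 1 / δ) := one_mul _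
      _ ≤ Δ ^ 2 := hkey.trans hbound
    · nlinarith
  nlinarith [sq_nonneg Δ, hK]
end

section
/- There are constants c₁, c₂, c₃, c₄, c₅ > 0 such that for every m ≥ c₁ there exist d ∈ ℕ, a set A ⊂ S^{d−1} with γ₁(A) ≤ c₂, and t₀ ∈ ℝ for which the following holds. Let X be uniformly distributed on the cube [−√3, √3]^d and let X₁,…,X_m be independent copies of X. Then σ_x²(t₀) ∈ [c₃/√m, c₄/√m] for every x ∈ A, and with probability at least 0.9, sup_{x∈A} |F_{m,x}(t₀) − F_x(t₀)| ≥ c₅/√m. -/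
open MeasureTheory Real Set

noncomputable section

/-- Euclidean distance on `Fin d → ℝ`. -/
def euclDist {d : ℕ} (x y : Fin d → ℝ) : ℝ := Real.sqrt (∑ i, (x i - y i) ^ 2)

/-- The Euclidean unit sphere in `Fin d → ℝ`. -/
def unitSphere (d : ℕ) : Set (Fin d → ℝ) := {x | ∑ i, (x i) ^ 2 = 1}

/-- The Euclidean inner product on `Fin d → ℝ`. -/
def dotp {d : ℕ} (v x : Fin d → ℝ) : ℝ := ∑ i, v i * x i

/-- The cube `[-√3, √3]^d`. -/
def cube (d : ℕ) : Set (Fin d → ℝ) := {v | ∀ i, v i ∈ Set.Icc (-Real.sqrt 3) (Real.sqrt 3)}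

/-- The uniform probability measure on the cube `[-√3, √3]^d`. -/
def unifCube (d : ℕ) : Measure (Fin d → ℝ) :=
  (volume (cube d))⁻¹ • (volume : Measure (Fin d → ℝ)).restrict (cube d)

namespace VDF

def s3 : ℝ := Real.sqrt 3

lemma s3_pos : 0 < s3 := Real.sqrt_pos.2 (by norm_num)
lemma s3_sq : s3 ^ 2 = 3 := Real.sq_sqrt (by norm_num)
lemma s3_lb : 1.732 ≤ s3 := by nlinarith [s3_sq, s3_pos.le]
lemma s3_ub : s3 ≤ 1.733 := by nlinarith [s3_sq, s3_pos.le]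

def μ0 : Measure ℝ := (ENNReal.ofReal (2 * s3))⁻¹ • (volume.restrict (Icc (-s3) s3))

lemma μ0_apply (S : Set ℝ) : μ0 S = (ENNReal.ofReal (2 * s3))⁻¹ * volume (S ∩ Icc (-s3) s3) := by
  rw [μ0, Measure.smul_apply, Measure.restrict_apply' measurableSet_Icc, smul_eq_mul]

lemma two_s3_pos : (0:ℝ) < 2 * s3 := by linarith [s3_pos]

lemma μ0_Iic {a : ℝ} (h1 : -s3 ≤ a) (h2 : a ≤ s3) :
    μ0 (Iic a) = ENNReal.ofReal ((a + s3) / (2 * s3)) := by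
  rw [μ0_apply]
  have : Iic a ∩ Icc (-s3) s3 = Icc (-s3) a := by
    ext x; simp only [mem_inter_iff, mem_Iic, mem_Icc]
    constructor
    · rintro ⟨h, h', _⟩; exact ⟨h', h⟩
    · rintro ⟨h, h'⟩; exact ⟨h', h, le_trans h' h2⟩
  rw [this, Real.volume_Icc, ENNReal.ofReal_div_of_pos two_s3_pos, ENNReal.div_eq_inv_mul]
  norm_num

lemma μ0_Ici {a : ℝ} (h1 : -s3 ≤ a) (h2 : a ≤ s3) :
    μ0 (Ici a) = ENNReal.ofReal ((s3 - a) / (2 * s3)) := by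
  rw [μ0_apply]
  have : Ici a ∩ Icc (-s3) s3 = Icc a s3 := by
    ext x; simp only [mem_inter_iff, mem_Ici, mem_Icc]
    constructor
    · rintro ⟨h, _, h'⟩; exact ⟨h, h'⟩
    · rintro ⟨h, h'⟩; exact ⟨h, le_trans h1 h, h'⟩
  rw [this, Real.volume_Icc, ENNReal.ofReal_div_of_pos two_s3_pos, ENNReal.div_eq_inv_mul]

lemma μ0_univ : μ0 univ = 1 := by
  rw [μ0_apply, univ_inter, Real.volume_Icc]
  rw [show s3 - -s3 = 2 * s3 by ring]
  exact ENNReal.inv_mul_cancel (ENNReal.ofReal_pos.2 two_s3_pos).ne' ENNReal.ofReal_ne_top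

instance : IsProbabilityMeasure μ0 := ⟨μ0_univ⟩

lemma μ0_out : μ0 (Icc (-s3) s3)ᶜ = 0 := by
  rw [μ0_apply, compl_inter_self, measure_empty, mul_zero]

/-- uniform cube is an iid product of `μ0`. -/
lemma unifCube_eq (d : ℕ) : unifCube d = Measure.pi (fun _ : Fin d => μ0) := by
  symm
  apply Measure.pi_eq
  intro s _
  have hcube : cube d = univ.pi (fun _ : Fin d => Icc (-s3) s3) := by
    ext v; simp only [cube, mem_setOf_eq, Set.mem_univ_pi, mem_Icc, s3]
  have hvolpi : (volume : Measure (Fin d → ℝ)) = Measure.pi (fun _ => volume) := by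
    rw [MeasureTheory.volume_pi]
  have hvc : volume (cube d) = (ENNReal.ofReal (2 * s3)) ^ d := by
    rw [hcube, hvolpi, Measure.pi_pi]
    simp [Real.volume_Icc, show s3 - -s3 = 2 * s3 by ring]
  rw [unifCube, Measure.smul_apply, Measure.restrict_apply' (by
        rw [hcube]; exact MeasurableSet.univ_pi (fun _ => measurableSet_Icc)),
      hvc, smul_eq_mul, ENNReal.inv_pow]
  rw [hcube]
  rw [← Set.pi_inter_distrib, hvolpi, Measure.pi_pi]
  rw [show ((ENNReal.ofReal (2*s3))⁻¹)^d = ∏ _i : Fin d, (ENNReal.ofReal (2*s3))⁻¹ by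
        simp [Finset.prod_const], ← Finset.prod_mul_distrib]
  exact Finset.prod_congr rfl fun i _ => (μ0_apply (s i)).symm

instance (d : ℕ) : IsProbabilityMeasure (unifCube d) := by
  rw [unifCube_eq]; infer_instance

/-- product of `μ0` over `Fin k`. -/
def nu (k : ℕ) : Measure (Fin k → ℝ) := Measure.pi (fun _ => μ0)

instance (k : ℕ) : IsProbabilityMeasure (nu k) := by unfold nu; infer_instance

lemma nu_pi {k : ℕ} (B : Fin k → Set ℝ) : nu k (univ.pi B) = ∏ i, μ0 (B i) :=
  Measure.pi_pi _ _

lemma nu_one {k : ℕ} (a : Fin k) (S : Set ℝ) : nu k {z | z a ∈ S} = μ0 S := by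
  have : {z : Fin k → ℝ | z a ∈ S} = univ.pi (fun l => if l = a then S else univ) := by
    ext z
    simp only [mem_setOf_eq, Set.mem_univ_pi]
    constructor
    · intro h l; split
      · next h' => subst h'; exact h
      · exact mem_univ _
    · intro h; have := h a; rwa [if_pos rfl] at this
  rw [this, nu_pi]
  have : ∀ l : Fin k, μ0 (if l = a then S else univ) = if l = a then μ0 S else 1 := by
    intro l; split <;> simp [μ0_univ]
  simp_rw [this]
  rw [Finset.prod_ite_eq' Finset.univ a (fun _ => μ0 S)]
  simp

lemma nu_two {k : ℕ} {a b : Fin k} (hab : a ≠ b) (S S' : Set ℝ) :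
    nu k ({z | z a ∈ S} ∩ {z | z b ∈ S'}) = μ0 S * μ0 S' := by
  have hset : {z : Fin k → ℝ | z a ∈ S} ∩ {z | z b ∈ S'} =
      univ.pi (fun l => if l = a then S else if l = b then S' else univ) := by
    ext z
    simp only [mem_inter_iff, mem_setOf_eq, Set.mem_univ_pi]
    constructor
    · rintro ⟨h1, h2⟩ l
      split
      · next h => subst h; exact h1
      · split
        · next h => subst h; exact h2
        · exact mem_univ _
    · intro h
      refine ⟨?_, ?_⟩
      · have := h a; rwa [if_pos rfl] at this
      · have := h b; rwa [if_neg (Ne.symm hab), if_pos rfl] at this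
  rw [hset, nu_pi]
  rw [← Finset.prod_subset (Finset.subset_univ ({a, b} : Finset (Fin k)))
      (fun x _ hx => ?_)]
  · rw [Finset.prod_pair hab, if_pos rfl, if_neg (Ne.symm hab), if_pos rfl]
  · simp only [Finset.mem_insert, Finset.mem_singleton, not_or] at hx
    rw [if_neg hx.1, if_neg hx.2, μ0_univ]

lemma nu_forall_mem {k : ℕ} (σ : Finset (Fin k)) (S : Set ℝ) :
    nu k {z | ∀ i ∈ σ, z i ∈ S} = μ0 S ^ σ.card := by
  have hset : {z : Fin k → ℝ | ∀ i ∈ σ, z i ∈ S} =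
      univ.pi (fun l => if l ∈ σ then S else univ) := by
    ext z
    simp only [mem_setOf_eq, Set.mem_univ_pi]
    constructor
    · intro h l; split
      · next h' => exact h l h'
      · exact mem_univ _
    · intro h i hi; have := h i; rwa [if_pos hi] at this
  rw [hset, nu_pi]
  have : ∀ l : Fin k, μ0 (if l ∈ σ then S else univ) = if l ∈ σ then μ0 S else 1 := by
    intro l; split <;> simp [μ0_univ]
  simp_rw [this]
  rw [Finset.prod_ite_mem, Finset.univ_inter, Finset.prod_const]

end VDF

namespace VDF2
open VDF

/-- the iid grid measure -/
def PP (m d : ℕ) : Measure (Fin m → Fin d → ℝ) := Measure.pi (fun _ => nu d)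

instance (m d : ℕ) : IsProbabilityMeasure (PP m d) := by unfold PP; infer_instance

lemma measurable_transpose (m d : ℕ) :
    Measurable (fun (ω : Fin m → Fin d → ℝ) (j : Fin d) (i : Fin m) => ω i j) := by
  apply measurable_pi_lambda
  intro j
  apply measurable_pi_lambda
  intro i
  exact (measurable_pi_apply j).comp (measurable_pi_apply i)

lemma transpose_preserving (m d : ℕ) :
    MeasurePreserving (fun (ω : Fin m → Fin d → ℝ) (j : Fin d) (i : Fin m) => ω i j)
      (PP m d) (Measure.pi (fun _ : Fin d => nu m)) := by
  refine ⟨measurable_transpose m d, ?_⟩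
  symm
  refine Measure.pi_eq_generateFrom (C := fun _ => pi univ '' pi univ fun _ => {s : Set ℝ | MeasurableSet s})
    (fun _ => generateFrom_pi) (fun _ => isPiSystem_pi) (fun _ => ?_) ?_
  · refine ⟨fun _ => univ, fun _ => ?_, fun _ => ?_, ?_⟩
    · exact ⟨fun _ => univ, fun i _ => by simp only [mem_setOf_eq]; exact MeasurableSet.univ, by simp⟩
    · simp
    · simp [iUnion_const]
  · intro S hS
    have hR : ∀ j, ∃ R : Fin m → Set ℝ, (∀ i, MeasurableSet (R i)) ∧ univ.pi R = S j := by
      intro j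
      obtain ⟨R, hR1, hR2⟩ := hS j
      exact ⟨R, fun i => hR1 i (mem_univ i), hR2⟩
    choose R hRmeas hReq using hR
    have hSmeas : ∀ j, MeasurableSet (S j) := fun j =>
      (hReq j) ▸ MeasurableSet.univ_pi (fun i => hRmeas j i)
    rw [Measure.map_apply (measurable_transpose m d) (MeasurableSet.univ_pi hSmeas)]
    have hpre : (fun (ω : Fin m → Fin d → ℝ) (j : Fin d) (i : Fin m) => ω i j) ⁻¹'
        (univ.pi S) = univ.pi (fun i => univ.pi (fun j => R j i)) := by
      ext ω
      simp only [mem_preimage, Set.mem_univ_pi]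
      constructor
      · intro h i j
        have := h j
        rw [← hReq j] at this
        exact this i (mem_univ i)
      · intro h j
        rw [← hReq j]
        intro i _
        exact h i j
    rw [hpre, PP, Measure.pi_pi]
    have : ∀ i : Fin m, nu d (univ.pi fun j => R j i) = ∏ j, μ0 (R j i) := fun i => nu_pi _
    simp_rw [this]
    rw [Finset.prod_comm]
    exact Finset.prod_congr rfl fun j _ => by rw [← hReq j, nu_pi]

/-- probability of an event depending only on coordinate `a` of the outer index. -/
lemma pd_eval {m d : ℕ} (a : Fin d) (S : Set (Fin m → ℝ)) :
    (Measure.pi (fun _ : Fin d => nu m)) (Function.eval a ⁻¹' S) = nu m S := by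
  have : Function.eval a ⁻¹' S = univ.pi (fun j => if j = a then S else univ) := by
    ext η
    simp only [mem_preimage, Function.eval, Set.mem_univ_pi]
    constructor
    · intro h l; split
      · next h' => subst h'; exact h
      · exact mem_univ _
    · intro h; have := h a; rwa [if_pos rfl] at this
  rw [this, Measure.pi_pi]
  have : ∀ l : Fin d, nu m (if l = a then S else univ) = if l = a then nu m S else 1 := by
    intro l; split <;> simp
  simp_rw [this]
  rw [Finset.prod_ite_eq' Finset.univ a (fun _ => nu m S)]
  simp

end VDF2

namespace VDF3
open VDF VDF2

def sm (m : ℕ) : ℝ := Real.sqrt m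
def tau (m : ℕ) : ℝ := 6 / sm m
def t0v (m : ℕ) : ℝ := -s3 + 2 * s3 / sm m
def wv (m : ℕ) : ℝ := (3/2) * tau m - s3 * tau m ^ 2
def rr (m : ℕ) : ℝ := t0v m + wv m
def pw (m : ℕ) : ℝ := 1 / sm m + wv m / (2 * s3)
def lam (m : ℕ) : ℝ := sm m / 100
def Qn (m : ℕ) : ℕ := ⌈(m:ℝ) * pw m + lam m⌉₊
def Nc (m : ℕ) : ℕ := 4 * 15 ^ Qn m
abbrev dd (m : ℕ) : ℕ := Nc m + 1
def sq1 (m : ℕ) : ℝ := Real.sqrt (1 + tau m ^ 2)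
def ssv (m : ℕ) : ℝ := (sq1 m)⁻¹
def Tt (m : ℕ) : ℝ := t0v m * sq1 m
def ρv : ℝ := (s3 - 3/2) / (2 * s3)

lemma rho_lb : 1/15 ≤ ρv := by
  unfold ρv
  rw [le_div_iff₀ two_s3_pos]
  nlinarith [s3_lb]

lemma rho_ub : ρv ≤ 1 := by
  unfold ρv
  rw [div_le_one two_s3_pos]
  nlinarith [s3_lb]

lemma rho_pos : 0 < ρv := lt_of_lt_of_le (by norm_num) rho_lb

section Numeric
variable {m : ℕ} (hm : (10:ℝ)^13 ≤ m)
include hm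

lemma sm_ge : (10:ℝ)^6 ≤ sm m := by
  have h0 : ((10:ℝ)^6)^2 ≤ (m:ℝ) := by norm_num at hm ⊢; linarith
  have := Real.sqrt_le_sqrt h0
  rwa [Real.sqrt_sq (by positivity)] at this

lemma sm_pos : 0 < sm m := lt_of_lt_of_le (by norm_num) (sm_ge hm)

lemma sm_sq : sm m ^ 2 = m := Real.sq_sqrt (by positivity)

lemma tau_pos : 0 < tau m := div_pos (by norm_num) (sm_pos hm)

lemma tau_le : tau m ≤ 6 / 10^6 := by
  unfold tau
  exact div_le_div_of_nonneg_left (by norm_num) (by norm_num) (sm_ge hm)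

lemma tau_sm : tau m * sm m = 6 := by
  unfold tau; exact div_mul_cancel₀ _ (sm_pos hm).ne'

lemma wv_lb : 1.4 * tau m ≤ wv m := by
  unfold wv
  nlinarith [tau_pos hm, tau_le hm, s3_ub, s3_pos]

lemma wv_ub : wv m ≤ 1.5 * tau m := by
  unfold wv
  nlinarith [s3_pos, sq_nonneg (tau m)]

lemma wv_pos : 0 < wv m :=
  lt_of_lt_of_le (by nlinarith [tau_pos hm]) (wv_lb hm)

lemma t0v_lb : -s3 < t0v m := by
  have hs := sm_pos hm
  have h2 : 0 < 2 * s3 / sm m := div_pos (by nlinarith [s3_pos]) hs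
  unfold t0v; linarith

lemma t0v_ub : t0v m ≤ -1 := by
  unfold t0v
  have h1 := sm_ge hm
  have h2 : 2 * s3 / sm m ≤ 2 * s3 / 10^6 :=
    div_le_div_of_nonneg_left two_s3_pos.le (by norm_num) h1
  have := s3_lb
  have := s3_ub
  nlinarith

lemma rr_lb : -s3 < rr m := by
  have := wv_pos hm; have := t0v_lb hm; unfold rr; linarith

lemma rr_ub : rr m ≤ 0 := by
  have h1 := wv_ub hm
  have h2 := tau_le hm
  have h3 := t0v_ub hm
  have h4 := tau_pos hm
  unfold rr; nlinarith

lemma pw_eq : rr m + s3 = 2 * s3 * pw m := by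
  have h := (sm_pos hm).ne'
  unfold rr pw t0v wv
  field_simp [s3_pos.ne']
  ring

lemma pw_pos : 0 < pw m := by
  have h1 := div_pos (wv_pos hm) two_s3_pos
  have h2 : 0 < 1 / sm m := one_div_pos.mpr (sm_pos hm)
  unfold pw; linarith

lemma pw_ub : pw m ≤ 4 / sm m := by
  have hs := sm_pos hm
  have h9 : (1.5:ℝ) * tau m = 9 / sm m := by unfold tau; ring
  have h1 : wv m ≤ 9 / sm m := h9 ▸ wv_ub hm
  have h2 : wv m / (2 * s3) ≤ (9 / sm m) / (2 * s3) :=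
    (div_le_div_iff_of_pos_right two_s3_pos).mpr h1
  have h3 : (9 / sm m) / (2 * s3) ≤ (9 / sm m) / 3 :=
    div_le_div_of_nonneg_left (le_of_lt (div_pos (by norm_num) hs)) (by norm_num)
      (by nlinarith [s3_lb])
  have h4 : (9 / sm m) / 3 = 3 / sm m := by ring
  have h5 : (1:ℝ) / sm m + 3 / sm m = 4 / sm m := by ring
  unfold pw; linarith

lemma mpw_ub : (m:ℝ) * pw m ≤ 4 * sm m := by
  have h := pw_ub hm
  have hs := sm_pos hm
  have hsq := sm_sq hm
  calc (m:ℝ) * pw m ≤ (m:ℝ) * (4 / sm m) :=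
        mul_le_mul_of_nonneg_left h (by positivity)
    _ = 4 * sm m := by rw [← hsq]; field_simp

lemma mpw_pos : 0 < (m:ℝ) * pw m := by
  have h1 := pw_pos hm
  have h2 : (0:ℝ) < m := by norm_num at hm ⊢; linarith
  exact mul_pos h2 h1

lemma lam_pos : 0 < lam m := div_pos (sm_pos hm) (by norm_num)

lemma Qn_ub : (Qn m : ℝ) ≤ 5 * sm m := by
  have h1 : (m:ℝ) * pw m + lam m ≤ 4 * sm m + sm m / 100 := by
    have := mpw_ub hm; unfold lam; linarith
  have h2 : (Qn m : ℝ) < (m:ℝ) * pw m + lam m + 1 := by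
    apply Nat.ceil_lt_add_one
    exact le_of_lt (add_pos (mpw_pos hm) (lam_pos hm))
  have hs := sm_ge hm
  nlinarith

lemma sq1_ge : 1 ≤ sq1 m := by
  have h : Real.sqrt 1 ≤ sq1 m := Real.sqrt_le_sqrt (by nlinarith [sq_nonneg (tau m)])
  simpa using h

lemma sq1_le : sq1 m ≤ 1 + tau m ^ 2 := by
  have h := Real.sqrt_le_sqrt (show 1 + tau m^2 ≤ (1 + tau m^2)^2 by nlinarith [sq_nonneg (tau m)])
  rwa [Real.sqrt_sq (by nlinarith [sq_nonneg (tau m)])] at h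

lemma sq1_pos : 0 < sq1 m := lt_of_lt_of_le one_pos (sq1_ge hm)

lemma ssv_pos : 0 < ssv m := by
  have := sq1_pos hm; unfold ssv; positivity

lemma ssv_le : ssv m ≤ 1 := by
  have h := sq1_ge hm
  have h0 := sq1_pos hm
  unfold ssv
  rw [inv_le_one_iff₀]
  right; exact h

lemma ssv_mul : ssv m * sq1 m = 1 := by
  have := (sq1_pos hm).ne'
  unfold ssv
  field_simp

lemma Tt_le_t0v : Tt m ≤ t0v m := by
  have h := mul_le_mul_of_nonpos_left (sq1_ge hm) (by linarith [t0v_ub hm] : t0v m ≤ 0)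
  unfold Tt; linarith

lemma Tt_ge : t0v m - s3 * tau m ^ 2 ≤ Tt m := by
  have e1 : t0v m * (sq1 m) ≥ t0v m * (1 + tau m ^2) :=
    mul_le_mul_of_nonpos_left (sq1_le hm) (by linarith [t0v_ub hm] : t0v m ≤ 0)
  have e2 : (t0v m + s3) * tau m ^ 2 ≥ 0 :=
    mul_nonneg (by linarith [t0v_lb hm]) (sq_nonneg _)
  unfold Tt; nlinarith

lemma Tt_lb : -s3 < Tt m := by
  have ht : tau m ^ 2 * sm m = 6 * tau m := by
    rw [sq, mul_assoc, tau_sm hm]; ring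
  have k : s3 * tau m ^ 2 < 2 * s3 / sm m := by
    rw [lt_div_iff₀ (sm_pos hm), mul_assoc, ht]
    nlinarith [tau_le hm, s3_pos, tau_pos hm]
  have h1 := Tt_ge hm
  unfold t0v at h1
  linarith

lemma Tt_ub : Tt m ≤ -1 := le_trans (Tt_le_t0v hm) (t0v_ub hm)

end Numeric
end VDF3

namespace VDF4
open VDF VDF2 VDF3

instance (m : ℕ) : NeZero (dd m) := ⟨Nat.succ_ne_zero _⟩

def xv (m : ℕ) (j : Fin (Nc m)) : Fin (dd m) → ℝ :=
  fun l => if l = 0 then ssv m else if l = j.succ then -(tau m * ssv m) else 0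

lemma succ_ne_zero' {m : ℕ} (j : Fin (Nc m)) : (j.succ : Fin (dd m)) ≠ 0 :=
  Fin.succ_ne_zero j

lemma dotp_xv {m : ℕ} (j : Fin (Nc m)) (v : Fin (dd m) → ℝ) :
    dotp v (xv m j) = ssv m * v 0 - tau m * ssv m * v j.succ := by
  unfold dotp xv
  have h0succ : (0 : Fin (dd m)) ≠ j.succ := (succ_ne_zero' j).symm
  rw [← Finset.sum_subset (Finset.subset_univ ({0, j.succ} : Finset (Fin (dd m))))
      (fun x _ hx => ?_)]
  · rw [Finset.sum_pair h0succ]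
    rw [if_pos rfl, if_neg (succ_ne_zero' j), if_pos rfl]
    ring
  · simp only [Finset.mem_insert, Finset.mem_singleton, not_or] at hx
    rw [if_neg hx.1, if_neg hx.2, mul_zero]

lemma xv_sphere {m : ℕ} (hm : (10:ℝ)^13 ≤ m) (j : Fin (Nc m)) :
    ∑ l, (xv m j l)^2 = 1 := by
  unfold xv
  have h0succ : (0 : Fin (dd m)) ≠ j.succ := (succ_ne_zero' j).symm
  rw [← Finset.sum_subset (Finset.subset_univ ({0, j.succ} : Finset (Fin (dd m))))
      (fun x _ hx => ?_)]
  · rw [Finset.sum_pair h0succ]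
    rw [if_pos rfl, if_neg (succ_ne_zero' j), if_pos rfl]
    have h1 : (0:ℝ) ≤ 1 + tau m ^ 2 := by nlinarith [sq_nonneg (tau m)]
    have h2 : sq1 m ^ 2 = 1 + tau m ^ 2 := Real.sq_sqrt h1
    have h3 := sq1_pos hm
    have : ssv m ^ 2 = (1 + tau m ^2)⁻¹ := by
      unfold ssv
      rw [← h2]
      rw [← inv_pow]
    have h5 : ssv m^2 * (1 + tau m^2) = 1 := by
      rw [this]; exact inv_mul_cancel₀ (by nlinarith)
    linear_combination h5
  · simp only [Finset.mem_insert, Finset.mem_singleton, not_or] at hx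
    rw [if_neg hx.1, if_neg hx.2]
    norm_num

lemma xv_dist {m : ℕ} (hm : (10:ℝ)^13 ≤ m) (j j' : Fin (Nc m)) :
    euclDist (xv m j) (xv m j') ≤ 9 / sm m := by
  have h9 : (0:ℝ) ≤ 9 / sm m := le_of_lt (div_pos (by norm_num) (sm_pos hm))
  by_cases hjj : j = j'
  · subst hjj
    unfold euclDist
    simp [sub_self]
    exact h9
  · have hsucc : (j.succ : Fin (dd m)) ≠ (j'.succ : Fin (dd m)) := by
      intro h; exact hjj (Fin.succ_injective _ h)
    unfold euclDist
    have hsum : ∑ l, (xv m j l - xv m j' l)^2 = 2 * (tau m * ssv m)^2 := by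
      rw [← Finset.sum_subset
          (Finset.subset_univ ({j.succ, j'.succ} : Finset (Fin (dd m))))
          (fun x _ hx => ?_)]
      · rw [Finset.sum_pair hsucc]
        unfold xv
        rw [if_neg (succ_ne_zero' j), if_pos rfl, if_neg (succ_ne_zero' j),
            if_neg (Ne.symm hsucc), if_neg (succ_ne_zero' j'), if_neg hsucc,
            if_neg (succ_ne_zero' j'), if_pos rfl]
        ring
      · simp only [Finset.mem_insert, Finset.mem_singleton, not_or] at hx
        unfold xv
        by_cases hx0 : x = 0
        · rw [if_pos hx0, if_pos hx0]; ring
        · rw [if_neg hx0, if_neg hx.1, if_neg hx0, if_neg hx.2]; ring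
    rw [hsum]
    have hb : 2 * (tau m * ssv m)^2 ≤ (9 / sm m)^2 := by
      have h1 := ssv_le hm
      have h2 := ssv_pos hm
      have h3 : tau m = 6 / sm m := rfl
      have h4 := sm_pos hm
      have h5 : tau m ^ 2 = 36 / sm m ^2 := by rw [h3]; ring
      have h6 : (9 / sm m)^2 = 81 / sm m ^2 := by ring
      have h7 : (tau m * ssv m)^2 = tau m ^2 * ssv m ^2 := by ring
      rw [h6, h7, h5]
      rw [show (2:ℝ) * (36 / sm m^2 * ssv m^2) = (72 * ssv m^2) / sm m^2 by ring]
      exact (div_le_div_iff_of_pos_right (pow_pos h4 2)).mpr (by nlinarith)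
    calc Real.sqrt (2 * (tau m * ssv m)^2) ≤ Real.sqrt ((9 / sm m)^2) :=
          Real.sqrt_le_sqrt hb
      _ = 9 / sm m := Real.sqrt_sq h9

lemma dotp_le_iff {m : ℕ} (hm : (10:ℝ)^13 ≤ m) (j : Fin (Nc m)) (v : Fin (dd m) → ℝ) :
    dotp v (xv m j) ≤ t0v m ↔ v 0 - tau m * v j.succ ≤ Tt m := by
  have ht : ssv m * Tt m = t0v m := by
    have h := ssv_mul hm
    unfold Tt
    linear_combination (t0v m) * h
  rw [show dotp v (xv m j) = ssv m * (v 0 - tau m * v j.succ) by rw [dotp_xv]; ring, ← ht]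
  exact mul_le_mul_iff_right₀ (ssv_pos hm)

end VDF4

namespace VDF5
open VDF VDF2 VDF3 VDF4

lemma unifCube_eq_nu (d : ℕ) : unifCube d = nu d := unifCube_eq d

variable {m : ℕ}

lemma mu0_half_Iic : μ0 (Iic (0:ℝ)) = ENNReal.ofReal (1/2) := by
  rw [μ0_Iic (by linarith [s3_pos]) s3_pos.le]
  congr 1
  field_simp [s3_pos.ne']
  ring

lemma mu0_half_Ici : μ0 (Ici (0:ℝ)) = ENNReal.ofReal (1/2) := by
  rw [μ0_Ici (by linarith [s3_pos]) s3_pos.le]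
  congr 1
  field_simp [s3_pos.ne']
  ring

lemma tau_sq (hm : (10:ℝ)^13 ≤ m) : tau m ^ 2 / 2 = 18 / sm m ^ 2 := by
  unfold tau; ring

lemma cdf_ub (hm : (10:ℝ)^13 ≤ m) (j : Fin (Nc m)) :
    cdfOf (unifCube (dd m)) (fun v => dotp v (xv m j)) (t0v m) ≤ 1 / sm m + tau m / 4 := by
  have hs := sm_pos hm
  have htp := tau_pos hm
  have hTA1 : -s3 ≤ Tt m + tau m * s3 := by nlinarith [Tt_lb hm, s3_pos]
  have hTA2 : Tt m + tau m * s3 ≤ s3 := by nlinarith [Tt_ub hm, tau_le hm, s3_lb, s3_ub]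
  have hT1 : -s3 ≤ Tt m := (Tt_lb hm).le
  have hT2 : Tt m ≤ s3 := le_trans (Tt_ub hm) (by nlinarith [s3_lb])
  set FA : ℝ := (Tt m + tau m * s3 + s3) / (2*s3) with hFA
  set FB : ℝ := (Tt m + s3) / (2*s3) with hFB
  have hFA0 : 0 ≤ FA := div_nonneg (by linarith) two_s3_pos.le
  have hFB0 : 0 ≤ FB := div_nonneg (by linarith) two_s3_pos.le
  have hsub : {v : Fin (dd m) → ℝ | dotp v (xv m j) ≤ t0v m} ⊆
      ({v : Fin (dd m) → ℝ | v 0 ∈ Iic (Tt m + tau m * s3)} ∩ {v | v j.succ ∈ Ici (0:ℝ)}) ∪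
      ({v : Fin (dd m) → ℝ | v 0 ∈ Iic (Tt m)} ∩ {v | v j.succ ∈ Iic (0:ℝ)}) ∪
      {v : Fin (dd m) → ℝ | v j.succ ∈ (Icc (-s3) s3)ᶜ} := by
    intro v hv
    rw [mem_setOf_eq, dotp_le_iff hm] at hv
    by_cases hin : v j.succ ∈ Icc (-s3) s3
    · rcases le_total 0 (v j.succ) with h0 | h0
      · left; left
        refine ⟨?_, h0⟩
        have : tau m * v j.succ ≤ tau m * s3 :=
          mul_le_mul_of_nonneg_left hin.2 htp.le
        simp only [mem_setOf_eq, mem_Iic]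
        linarith
      · left; right
        refine ⟨?_, h0⟩
        have : tau m * v j.succ ≤ 0 := mul_nonpos_of_nonneg_of_nonpos htp.le h0
        simp only [mem_setOf_eq, mem_Iic]
        linarith
    · right
      exact hin
  have hmeas : (unifCube (dd m)) {v | dotp v (xv m j) ≤ t0v m} ≤
      ENNReal.ofReal (FA/2 + FB/2) := by
    rw [unifCube_eq_nu]
    calc nu (dd m) {v | dotp v (xv m j) ≤ t0v m}
        ≤ nu (dd m) (_ ∪ _ ∪ _) := measure_mono hsub
      _ ≤ nu (dd m) (({v : Fin (dd m) → ℝ | v 0 ∈ Iic (Tt m + tau m * s3)} ∩ {v | v j.succ ∈ Ici (0:ℝ)}) ∪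
            ({v : Fin (dd m) → ℝ | v 0 ∈ Iic (Tt m)} ∩ {v | v j.succ ∈ Iic (0:ℝ)})) +
          nu (dd m) {v : Fin (dd m) → ℝ | v j.succ ∈ (Icc (-s3) s3)ᶜ} := measure_union_le _ _
      _ ≤ (nu (dd m) ({v : Fin (dd m) → ℝ | v 0 ∈ Iic (Tt m + tau m * s3)} ∩ {v | v j.succ ∈ Ici (0:ℝ)}) +
          nu (dd m) ({v : Fin (dd m) → ℝ | v 0 ∈ Iic (Tt m)} ∩ {v | v j.succ ∈ Iic (0:ℝ)})) +
          nu (dd m) {v : Fin (dd m) → ℝ | v j.succ ∈ (Icc (-s3) s3)ᶜ} := by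
          exact add_le_add (measure_union_le _ _) le_rfl
      _ = (ENNReal.ofReal FA * ENNReal.ofReal (1/2) +
            ENNReal.ofReal FB * ENNReal.ofReal (1/2)) + 0 := by
          rw [nu_two (succ_ne_zero' j).symm, nu_two (succ_ne_zero' j).symm, nu_one,
              μ0_out, μ0_Iic hTA1 hTA2, μ0_Iic hT1 hT2, mu0_half_Ici, mu0_half_Iic]
      _ = ENNReal.ofReal (FA/2 + FB/2) := by
          rw [add_zero, ← ENNReal.ofReal_mul hFA0, ← ENNReal.ofReal_mul hFB0,
              ← ENNReal.ofReal_add (by linarith) (by linarith)]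
          congr 1
          ring
  have hcd : cdfOf (unifCube (dd m)) (fun v => dotp v (xv m j)) (t0v m) ≤ FA/2 + FB/2 := by
    unfold cdfOf
    exact ENNReal.toReal_le_of_le_ofReal (by linarith) hmeas
  have e : t0v m + s3 = 2*s3/sm m := by unfold t0v; ring
  have efin : FA/2 + FB/2 ≤ 1/sm m + tau m/4 := by
    have h1 : FA/2 + FB/2 = (Tt m + s3 + tau m * s3/2) / (2*s3) := by
      rw [hFA, hFB]; ring
    have h2 : (Tt m + s3 + tau m * s3/2) / (2*s3) ≤
        (t0v m + s3 + tau m * s3/2) / (2*s3) :=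
      (div_le_div_iff_of_pos_right two_s3_pos).mpr (by linarith [Tt_le_t0v hm])
    have h3 : (t0v m + s3 + tau m * s3/2) / (2*s3) = 1/sm m + tau m/4 := by
      rw [show t0v m + s3 + tau m * s3/2 = 2*s3/sm m + tau m * s3/2 by rw [← e]]
      field_simp [s3_pos.ne']
      ring
    linarith
  linarith

lemma cdf_lb (hm : (10:ℝ)^13 ≤ m) (j : Fin (Nc m)) :
    0.45 / sm m ≤ cdfOf (unifCube (dd m)) (fun v => dotp v (xv m j)) (t0v m) := by
  have hs := sm_pos hm
  have htp := tau_pos hm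
  have hT1 : -s3 ≤ Tt m := (Tt_lb hm).le
  have hT2 : Tt m ≤ s3 := le_trans (Tt_ub hm) (by nlinarith [s3_lb])
  set FB : ℝ := (Tt m + s3) / (2*s3) with hFB
  have hFB0 : 0 ≤ FB := div_nonneg (by linarith) two_s3_pos.le
  have hsub : ({v : Fin (dd m) → ℝ | v 0 ∈ Iic (Tt m)} ∩ {v | v j.succ ∈ Ici (0:ℝ)}) ⊆
      {v : Fin (dd m) → ℝ | dotp v (xv m j) ≤ t0v m} := by
    rintro v ⟨h1, h2⟩
    rw [mem_setOf_eq, dotp_le_iff hm]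
    simp only [mem_setOf_eq, mem_Iic] at h1
    simp only [mem_setOf_eq, mem_Ici] at h2
    have : 0 ≤ tau m * v j.succ := mul_nonneg htp.le h2
    linarith
  have hmeas : ENNReal.ofReal (FB/2) ≤ (unifCube (dd m)) {v | dotp v (xv m j) ≤ t0v m} := by
    rw [unifCube_eq_nu]
    calc ENNReal.ofReal (FB/2)
        = ENNReal.ofReal FB * ENNReal.ofReal (1/2) := by
          rw [← ENNReal.ofReal_mul hFB0]; congr 1; ring
      _ = nu (dd m) ({v : Fin (dd m) → ℝ | v 0 ∈ Iic (Tt m)} ∩ {v | v j.succ ∈ Ici (0:ℝ)}) := by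
          rw [nu_two (succ_ne_zero' j).symm, μ0_Iic hT1 hT2, mu0_half_Ici]
      _ ≤ _ := measure_mono hsub
  have hcd : FB/2 ≤ cdfOf (unifCube (dd m)) (fun v => dotp v (xv m j)) (t0v m) := by
    unfold cdfOf
    have := ENNReal.toReal_mono (measure_ne_top _ _) hmeas
    rwa [ENNReal.toReal_ofReal (by linarith)] at this
  have e : t0v m + s3 = 2*s3/sm m := by unfold t0v; ring
  have h1 : (t0v m - s3 * tau m ^2 + s3) / (2*s3) ≤ FB :=
    (div_le_div_iff_of_pos_right two_s3_pos).mpr (by linarith [Tt_ge hm])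
  have h2 : (t0v m - s3 * tau m ^2 + s3) / (2*s3) = 1/sm m - tau m ^2/2 := by
    rw [show t0v m - s3 * tau m^2 + s3 = 2*s3/sm m - s3 * tau m^2 by rw [← e]; ring]
    field_simp [s3_pos.ne']
  have h3 : (18:ℝ)/sm m^2 ≤ 0.05/sm m := by
    rw [div_le_div_iff₀ (pow_pos hs 2) hs]
    nlinarith [sm_ge hm]
  have h4 := tau_sq hm
  have h5 : (1:ℝ)/sm m - 0.05/sm m = 0.95/sm m := by ring
  have h6 : (0.45:ℝ)/sm m ≤ 0.95/sm m / 2 := by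
    rw [show (0.95:ℝ)/sm m/2 = 0.475/sm m by ring]
    exact (div_le_div_iff_of_pos_right hs).mpr (by norm_num)
  linarith

end VDF5

namespace VDF6
open VDF VDF2 VDF3 VDF4 VDF5

variable {m : ℕ}

/-- the window count -/
def qc (m : ℕ) (z : Fin m → ℝ) : ℕ := (Finset.univ.filter fun i => z i ≤ rr m).card

def Bi (m : ℕ) (i : Fin m) : Set (Fin m → ℝ) := {z | z i ∈ Iic (rr m)}

lemma Bi_meas (i : Fin m) : MeasurableSet (Bi m i) :=
  (measurable_pi_apply i) measurableSet_Iic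

lemma nu_Bi (hm : (10:ℝ)^13 ≤ m) (i : Fin m) : nu m (Bi m i) = ENNReal.ofReal (pw m) := by
  rw [Bi, nu_one, μ0_Iic (rr_lb hm).le (le_trans (rr_ub hm) s3_pos.le), pw_eq hm,
      mul_div_cancel_left₀ _ two_s3_pos.ne']

def fI (m : ℕ) (i : Fin m) : (Fin m → ℝ) → ℝ := (Bi m i).indicator (fun _ => 1)

lemma fI_meas (i : Fin m) : Measurable (fI m i) :=
  measurable_const.indicator (Bi_meas i)

lemma fI_int (i : Fin m) : Integrable (fI m i) (nu m) :=
  (integrable_const 1).indicator (Bi_meas i)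

lemma fI_mul (i i' : Fin m) :
    (fun z => fI m i z * fI m i' z) = (Bi m i ∩ Bi m i').indicator (fun _ => (1:ℝ)) := by
  funext z
  rw [fI, fI, ← Set.inter_indicator_mul]
  simp

lemma fI_mul_int (i i' : Fin m) : Integrable (fun z => fI m i z * fI m i' z) (nu m) := by
  rw [fI_mul]
  exact (integrable_const 1).indicator ((Bi_meas i).inter (Bi_meas i'))

lemma fI_integral (hm : (10:ℝ)^13 ≤ m) (i : Fin m) : ∫ z, fI m i z ∂(nu m) = pw m := by
  rw [fI, integral_indicator_const (1:ℝ) (Bi_meas i), measureReal_def, nu_Bi hm i, smul_eq_mul, mul_one,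
      ENNReal.toReal_ofReal (pw_pos hm).le]

lemma fI_mul_integral (hm : (10:ℝ)^13 ≤ m) {i i' : Fin m} (h : i' ≠ i) :
    ∫ z, fI m i z * fI m i' z ∂(nu m) = pw m ^ 2 := by
  rw [fI_mul, integral_indicator_const (1:ℝ) ((Bi_meas i).inter (Bi_meas i'))]
  have : nu m (Bi m i ∩ Bi m i') = ENNReal.ofReal (pw m) * ENNReal.ofReal (pw m) := by
    rw [Bi, Bi, nu_two (Ne.symm h), μ0_Iic (rr_lb hm).le (le_trans (rr_ub hm) s3_pos.le),
        pw_eq hm, mul_div_cancel_left₀ _ two_s3_pos.ne']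
  rw [measureReal_def, this, ← ENNReal.ofReal_mul (pw_pos hm).le, smul_eq_mul, mul_one,
      ENNReal.toReal_ofReal (by nlinarith [pw_pos hm]), sq]

lemma fI_mul_self (i : Fin m) : (fun z => fI m i z * fI m i z) = fI m i := by
  classical
  funext z
  rw [fI]
  by_cases h : z ∈ Bi m i
  · rw [Set.indicator_of_mem h]; norm_num
  · rw [Set.indicator_of_notMem h]; norm_num

def gc (m : ℕ) : (Fin m → ℝ) → ℝ := fun z => ∑ i, fI m i z

lemma gc_meas : Measurable (gc m) :=
  Finset.measurable_sum _ (fun i _ => fI_meas i)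

lemma gc_int : Integrable (gc m) (nu m) :=
  integrable_finset_sum _ (fun i _ => fI_int i)

lemma qc_eq_gc (z : Fin m → ℝ) : (qc m z : ℝ) = gc m z := by
  classical
  rw [qc, Finset.card_filter, gc]
  push_cast
  apply Finset.sum_congr rfl
  intro i _
  rw [fI, Set.indicator_apply]
  by_cases h : z i ≤ rr m
  · rw [if_pos h, if_pos (by exact h)]
  · rw [if_neg h, if_neg (by exact h)]

lemma gc_integral (hm : (10:ℝ)^13 ≤ m) : ∫ z, gc m z ∂(nu m) = m * pw m := by
  unfold gc
  rw [integral_finset_sum _ (fun i _ => fI_int i)]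
  simp_rw [fI_integral hm]
  rw [Finset.sum_const, Finset.card_univ, Fintype.card_fin, nsmul_eq_mul]

lemma gc_mul_int : Integrable (fun z => gc m z * gc m z) (nu m) := by
  have : (fun z => gc m z * gc m z) = fun z => ∑ i, ∑ i', fI m i z * fI m i' z := by
    funext z
    rw [gc, Finset.sum_mul_sum]
  rw [this]
  exact integrable_finset_sum _ (fun i _ =>
    integrable_finset_sum _ (fun i' _ => fI_mul_int i i'))

lemma gc_sq_integral (hm : (10:ℝ)^13 ≤ m) :
    ∫ z, gc m z * gc m z ∂(nu m) = m * (pw m ^2 * m + (pw m - pw m ^2)) := by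
  have h1 : (fun z => gc m z * gc m z) = fun z => ∑ i, ∑ i', fI m i z * fI m i' z := by
    funext z; rw [gc, Finset.sum_mul_sum]
  rw [h1, integral_finset_sum _ (fun i _ =>
    integrable_finset_sum _ (fun i' _ => fI_mul_int i i'))]
  have h2 : ∀ i : Fin m, ∫ z, (∑ i', fI m i z * fI m i' z) ∂(nu m)
      = pw m ^2 * m + (pw m - pw m ^2) := by
    intro i
    rw [integral_finset_sum _ (fun i' _ => fI_mul_int i i')]
    have h3 : ∀ i' : Fin m, ∫ z, fI m i z * fI m i' z ∂(nu m)
        = pw m ^2 + (if i' = i then pw m - pw m^2 else 0) := by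
      intro i'
      by_cases h : i' = i
      · subst h
        rw [if_pos rfl, fI_mul_self, fI_integral hm]
        ring
      · rw [if_neg h, fI_mul_integral hm h, add_zero]
    simp_rw [h3]
    rw [Finset.sum_add_distrib, Finset.sum_const, Finset.sum_ite_eq' Finset.univ i
        (fun _ => pw m - pw m^2), if_pos (Finset.mem_univ i), Finset.card_univ,
        Fintype.card_fin, nsmul_eq_mul]
    ring
  simp_rw [h2]
  rw [Finset.sum_const, Finset.card_univ, Fintype.card_fin, nsmul_eq_mul]

lemma var_integral (hm : (10:ℝ)^13 ≤ m) :
    ∫ z, (gc m z - m * pw m)^2 ∂(nu m) = m * pw m * (1 - pw m) := by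
  have hdec : (fun z => (gc m z - m * pw m)^2) =
      fun z => (gc m z * gc m z - (2 * (m * pw m)) * gc m z) + (m * pw m)^2 := by
    funext z; ring
  have hint1 : Integrable (fun z => gc m z * gc m z - 2 * (↑m * pw m) * gc m z) (nu m) :=
    gc_mul_int.sub (gc_int.const_mul _)
  have hint2 : Integrable (fun z => 2 * (↑m * pw m) * gc m z) (nu m) := gc_int.const_mul _
  rw [hdec, integral_add hint1 (integrable_const _),
      integral_sub gc_mul_int hint2, MeasureTheory.integral_const_mul,
      gc_sq_integral hm, gc_integral hm, integral_const]
  have : (nu m univ).toReal = 1 := by simp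
  rw [smul_eq_mul, measureReal_def, this, one_mul]
  ring

lemma cheb (hm : (10:ℝ)^13 ≤ m) :
    nu m {z | lam m ^2 ≤ ((qc m z : ℝ) - m * pw m)^2} ≤ ENNReal.ofReal (1/25) := by
  have hset : {z : Fin m → ℝ | lam m ^2 ≤ ((qc m z : ℝ) - m * pw m)^2} =
      {z | lam m ^2 ≤ (gc m z - m * pw m)^2} := by
    ext z; rw [mem_setOf_eq, mem_setOf_eq, qc_eq_gc]
  rw [hset]
  set S := {z : Fin m → ℝ | lam m ^2 ≤ (gc m z - m * pw m)^2} with hS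
  have hSmeas : MeasurableSet S :=
    measurableSet_le measurable_const (((gc_meas).sub measurable_const).pow_const 2)
  have hVarInt : Integrable (fun z => (gc m z - m * pw m)^2) (nu m) := by
    have : (fun z => (gc m z - m * pw m)^2) =
        fun z => (gc m z * gc m z - (2 * (m * pw m)) * gc m z) + (m * pw m)^2 := by
      funext z; ring
    rw [this]
    exact (Integrable.sub gc_mul_int (gc_int.const_mul _)).add (integrable_const _)
  have key : lam m ^2 * (nu m S).toReal ≤ m * pw m * (1 - pw m) := by
    have e1 : lam m^2 * (nu m S).toReal = ∫ z in S, lam m ^2 ∂(nu m) := by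
      rw [setIntegral_const, smul_eq_mul, mul_comm, measureReal_def]
    have e2 : ∫ z in S, lam m ^2 ∂(nu m) ≤ ∫ z in S, (gc m z - m * pw m)^2 ∂(nu m) := by
      apply setIntegral_mono_on (integrable_const _).integrableOn
        hVarInt.integrableOn hSmeas
      intro z hz
      exact hz
    have e3 : ∫ z in S, (gc m z - m * pw m)^2 ∂(nu m) ≤
        ∫ z, (gc m z - m * pw m)^2 ∂(nu m) :=
      setIntegral_le_integral hVarInt (Filter.Eventually.of_forall (fun z => sq_nonneg _))
    rw [e1, ← var_integral hm]
    linarith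
  have hlam2 : lam m ^2 = sm m^2 / 10000 := by unfold lam; ring
  have hs := sm_pos hm
  have hsg := sm_ge hm
  have hfin : (nu m S).toReal ≤ 1/25 := by
    have h1 : m * pw m * (1 - pw m) ≤ 4 * sm m := by
      have := mpw_ub hm
      have := mpw_pos hm
      have hpw1 : pw m ≤ 1 := by
        have := pw_ub hm
        have : (4:ℝ)/sm m ≤ 1 := by
          rw [div_le_one hs]; linarith
        linarith [pw_ub hm]
      nlinarith [pw_pos hm]
    have h2 : 0 < lam m ^2 := by rw [hlam2]; positivity
    have h3 : (nu m S).toReal ≤ 4 * sm m / lam m ^2 := by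
      rw [le_div_iff₀ h2]
      nlinarith [key]
    have h4 : 4 * sm m / lam m ^2 = 40000 / sm m := by
      rw [hlam2]
      field_simp
      ring
    have h5 : (40000:ℝ) / sm m ≤ 1/25 := by
      rw [div_le_div_iff₀ hs (by norm_num)]
      linarith
    linarith
  rw [← ENNReal.le_ofReal_iff_toReal_le (measure_ne_top _ _) (by norm_num)] at hfin
  exact hfin

end VDF6

namespace VDF7
open VDF VDF2 VDF3 VDF4 VDF5 VDF6

variable {m : ℕ}

def Tr (m d : ℕ) : (Fin m → Fin d → ℝ) → (Fin d → Fin m → ℝ) :=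
  fun ω j i => ω i j

lemma Tr_preserving (m d : ℕ) :
    MeasurePreserving (Tr m d) (PP m d) (Measure.pi (fun _ : Fin d => nu m)) :=
  transpose_preserving m d

def col0 (m : ℕ) (ω : Fin m → Fin (dd m) → ℝ) : Fin m → ℝ := fun i => ω i 0

def G12 (m : ℕ) : Set (Fin m → Fin (dd m) → ℝ) :=
  {ω | ((qc m (col0 m ω) : ℝ) - m * pw m)^2 < lam m ^2}

def G3 (m : ℕ) : Set (Fin m → Fin (dd m) → ℝ) :=
  {ω | ∃ j : Fin (Nc m), ∀ i, ω i 0 ≤ rr m → (3/2:ℝ) ≤ ω i j.succ}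

lemma Sbad_meas : MeasurableSet {z : Fin m → ℝ | lam m ^2 ≤ ((qc m z : ℝ) - m * pw m)^2} := by
  have hset : {z : Fin m → ℝ | lam m ^2 ≤ ((qc m z : ℝ) - m * pw m)^2} =
      {z | lam m ^2 ≤ (gc m z - m * pw m)^2} := by
    ext z; rw [mem_setOf_eq, mem_setOf_eq, qc_eq_gc]
  rw [hset]
  exact measurableSet_le measurable_const (((gc_meas).sub measurable_const).pow_const 2)

lemma G12_compl_bound (hm : (10:ℝ)^13 ≤ m) :
    PP m (dd m) (G12 m)ᶜ ≤ ENNReal.ofReal (1/25) := by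
  have hpre : (G12 m)ᶜ = Tr m (dd m) ⁻¹' (Function.eval 0 ⁻¹'
      {z : Fin m → ℝ | lam m ^2 ≤ ((qc m z : ℝ) - m * pw m)^2}) := by
    ext ω
    simp only [G12, Tr, mem_compl_iff, mem_setOf_eq, mem_preimage, Function.eval, not_lt]
    rfl
  rw [hpre, (Tr_preserving m (dd m)).measure_preimage
      (((measurable_pi_apply 0) Sbad_meas).nullMeasurableSet), pd_eval]
  exact cheb hm

def Pat (m : ℕ) (σ : Finset (Fin m)) : Set (Fin m → ℝ) := {z | ∀ i, (z i ≤ rr m ↔ i ∈ σ)}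

def BadC (m : ℕ) (σ : Finset (Fin m)) : Set (Fin m → ℝ) := {z | ∃ i ∈ σ, z i < (3/2:ℝ)}

lemma Pat_meas (σ : Finset (Fin m)) : MeasurableSet (Pat m σ) := by
  have : Pat m σ = ⋂ i, {z : Fin m → ℝ | z i ≤ rr m ↔ i ∈ σ} := by
    ext z; simp [Pat, mem_iInter]
  rw [this]
  refine MeasurableSet.iInter (fun i => ?_)
  by_cases hi : i ∈ σ
  · have : {z : Fin m → ℝ | z i ≤ rr m ↔ i ∈ σ} = {z | z i ∈ Iic (rr m)} := by
      ext z; simp [hi]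
    rw [this]; exact (measurable_pi_apply i) measurableSet_Iic
  · have : {z : Fin m → ℝ | z i ≤ rr m ↔ i ∈ σ} = {z | z i ∈ Iic (rr m)}ᶜ := by
      ext z; simp [hi]
    rw [this]; exact ((measurable_pi_apply i) measurableSet_Iic).compl

lemma BadC_meas (σ : Finset (Fin m)) : MeasurableSet (BadC m σ) := by
  have : BadC m σ = ⋃ i ∈ σ, {z : Fin m → ℝ | z i < 3/2} := by
    ext z; simp [BadC]
  rw [this]
  exact MeasurableSet.biUnion σ.countable_toSet
    (fun i _ => (measurable_pi_apply i) measurableSet_Iio)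

lemma nu_BadC (σ : Finset (Fin m)) :
    nu m (BadC m σ) = 1 - ENNReal.ofReal (ρv ^ σ.card) := by
  have hc : BadC m σ = {z : Fin m → ℝ | ∀ i ∈ σ, z i ∈ Ici (3/2:ℝ)}ᶜ := by
    ext z
    simp [BadC, not_forall, not_le]
  have hmeas : MeasurableSet {z : Fin m → ℝ | ∀ i ∈ σ, z i ∈ Ici (3/2:ℝ)} := by
    have : {z : Fin m → ℝ | ∀ i ∈ σ, z i ∈ Ici (3/2:ℝ)} =
        ⋂ i ∈ σ, {z : Fin m → ℝ | z i ∈ Ici (3/2:ℝ)} := by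
      ext z; simp
    rw [this]
    exact MeasurableSet.biInter σ.countable_toSet
      (fun i _ => (measurable_pi_apply i) measurableSet_Ici)
  rw [hc, prob_compl_eq_one_sub hmeas, nu_forall_mem σ (Ici (3/2:ℝ)),
      μ0_Ici (by nlinarith [s3_lb]) (by nlinarith [s3_lb]),
      show (s3 - 3/2)/(2*s3) = ρv from rfl,
      ← ENNReal.ofReal_pow rho_pos.le]

lemma patterns_bound (hm : (10:ℝ)^13 ≤ m) :
    PP m (dd m) (G12 m ∩ (G3 m)ᶜ) ≤ ENNReal.ofReal (1/50) := by
  classical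
  set Ps : Finset (Finset (Fin m)) :=
    Finset.univ.powerset.filter (fun σ => σ.card ≤ Qn m) with hPs
  set Bσ : Finset (Fin m) → Fin (dd m) → Set (Fin m → ℝ) :=
    fun σ l => if l = 0 then Pat m σ else BadC m σ with hBσ
  -- step 1: inclusion
  have hsub : G12 m ∩ (G3 m)ᶜ ⊆ ⋃ σ ∈ Ps, Tr m (dd m) ⁻¹' (univ.pi (Bσ σ)) := by
    rintro ω ⟨h12, h3⟩
    set σ := Finset.univ.filter (fun i => ω i 0 ≤ rr m) with hσ
    have hqσ : qc m (col0 m ω) = σ.card := rfl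
    have hcard : σ.card ≤ Qn m := by
      rw [G12, mem_setOf_eq] at h12
      have hlt : (qc m (col0 m ω) : ℝ) < m * pw m + lam m := by
        nlinarith [sq_nonneg ((qc m (col0 m ω) : ℝ) - m * pw m + lam m), lam_pos hm]
      have hle : (m:ℝ) * pw m + lam m ≤ (Qn m : ℝ) := Nat.le_ceil _
      have : (qc m (col0 m ω) : ℝ) < (Qn m : ℝ) := lt_of_lt_of_le hlt hle
      rw [← hqσ]
      exact_mod_cast this.le
    refine Set.mem_iUnion.2 ⟨σ, Set.mem_iUnion.2 ⟨?_, ?_⟩⟩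
    · rw [hPs, Finset.mem_filter]
      exact ⟨Finset.mem_powerset.mpr (Finset.subset_univ _), hcard⟩
    · rw [mem_preimage, Set.mem_univ_pi]
      intro l
      by_cases hl : l = 0
      · subst hl
        rw [hBσ]
        simp only [if_pos rfl]
        intro i
        rw [hσ]
        simp [Tr]
      · rw [hBσ]
        simp only [if_neg hl]
        rw [G3, mem_compl_iff, mem_setOf_eq] at h3
        push_neg at h3
        obtain ⟨i, hi1, hi2⟩ := h3 ((l.pred hl))
        refine ⟨i, ?_, ?_⟩
        · rw [hσ, Finset.mem_filter]; exact ⟨Finset.mem_univ i, hi1⟩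
        · rw [Fin.succ_pred] at hi2
          exact hi2
  -- step 2: each Dσ
  have hDσ : ∀ σ ∈ Ps, PP m (dd m) (Tr m (dd m) ⁻¹' (univ.pi (Bσ σ))) ≤
      nu m (Pat m σ) * ENNReal.ofReal ((1 - ρv ^ Qn m)^(Nc m)) := by
    intro σ hσPs
    have hmeasB : ∀ l, MeasurableSet (Bσ σ l) := by
      intro l
      rw [hBσ]
      by_cases hl : l = 0
      · simp only [if_pos hl]; exact Pat_meas σ
      · simp only [if_neg hl]; exact BadC_meas σ
    rw [(Tr_preserving m (dd m)).measure_preimage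
        (MeasurableSet.univ_pi hmeasB).nullMeasurableSet, Measure.pi_pi]
    have h0 : Bσ σ 0 = Pat m σ := by rw [hBσ]; simp
    have hj : ∀ j : Fin (Nc m), Bσ σ j.succ = BadC m σ := by
      intro j; rw [hBσ]; simp only [if_neg (Fin.succ_ne_zero j)]
    have hprod : ∏ l, nu m (Bσ σ l) =
        nu m (Pat m σ) * (nu m (BadC m σ))^(Nc m) := by
      calc ∏ l, nu m (Bσ σ l)
          = nu m (Bσ σ 0) * ∏ j : Fin (Nc m), nu m (Bσ σ j.succ) :=
            Fin.prod_univ_succ _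
        _ = nu m (Pat m σ) * (nu m (BadC m σ))^(Nc m) := by
            rw [h0]
            congr 1
            have heq : ∏ j : Fin (Nc m), nu m (Bσ σ j.succ) =
                ∏ _j : Fin (Nc m), nu m (BadC m σ) :=
              Finset.prod_congr rfl (fun j _ => by rw [hj j])
            rw [heq, Finset.prod_const, Finset.card_univ, Fintype.card_fin]
    rw [hprod]
    apply mul_le_mul_right ?_ _
    -- (nu BadC)^Nc ≤ ofReal ((1-ρ^Qn)^Nc)
    have hcard : σ.card ≤ Qn m := by
      rw [hPs, Finset.mem_filter] at hσPs
      exact hσPs.2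
    have h1 : nu m (BadC m σ) ≤ ENNReal.ofReal (1 - ρv ^ Qn m) := by
      rw [nu_BadC σ]
      have hle : ρv ^ Qn m ≤ ρv ^ σ.card :=
        pow_le_pow_of_le_one rho_pos.le rho_ub hcard
      have h2 : ENNReal.ofReal (ρv ^ Qn m) ≤ ENNReal.ofReal (ρv ^ σ.card) :=
        ENNReal.ofReal_le_ofReal hle
      have h3 : ENNReal.ofReal (1 - ρv ^ Qn m) = 1 - ENNReal.ofReal (ρv ^ Qn m) := by
        rw [ENNReal.ofReal_sub _ (pow_nonneg rho_pos.le _), ENNReal.ofReal_one]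
      rw [h3]
      exact tsub_le_tsub le_rfl h2
    calc (nu m (BadC m σ))^(Nc m) ≤ (ENNReal.ofReal (1 - ρv ^ Qn m))^(Nc m) := by
          gcongr
      _ = ENNReal.ofReal ((1 - ρv ^ Qn m)^(Nc m)) := by
          rw [← ENNReal.ofReal_pow (by nlinarith [pow_le_one₀ rho_pos.le rho_ub (n := Qn m)])]
  -- step 3: sum of pattern measures ≤ 1
  have hdisj : (Ps : Set (Finset (Fin m))).PairwiseDisjoint (Pat m) := by
    intro σ _ σ' _ hne
    rw [Function.onFun, Set.disjoint_left]
    intro z hz hz'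
    apply hne
    ext i
    rw [← hz i, hz' i]
  have hsum : ∑ σ ∈ Ps, nu m (Pat m σ) ≤ 1 := by
    rw [← measure_biUnion_finset hdisj (fun σ _ => Pat_meas σ)]
    exact prob_le_one
  -- combine
  calc PP m (dd m) (G12 m ∩ (G3 m)ᶜ)
      ≤ PP m (dd m) (⋃ σ ∈ Ps, Tr m (dd m) ⁻¹' (univ.pi (Bσ σ))) := measure_mono hsub
    _ ≤ ∑ σ ∈ Ps, PP m (dd m) (Tr m (dd m) ⁻¹' (univ.pi (Bσ σ))) :=
        measure_biUnion_finset_le _ _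
    _ ≤ ∑ σ ∈ Ps, nu m (Pat m σ) * ENNReal.ofReal ((1 - ρv ^ Qn m)^(Nc m)) :=
        Finset.sum_le_sum hDσ
    _ = (∑ σ ∈ Ps, nu m (Pat m σ)) * ENNReal.ofReal ((1 - ρv ^ Qn m)^(Nc m)) := by
        rw [Finset.sum_mul]
    _ ≤ 1 * ENNReal.ofReal ((1 - ρv ^ Qn m)^(Nc m)) := by
        exact mul_le_mul_left hsum _
    _ = ENNReal.ofReal ((1 - ρv ^ Qn m)^(Nc m)) := one_mul _
    _ ≤ ENNReal.ofReal (1/50) := by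
        apply ENNReal.ofReal_le_ofReal
        -- real arithmetic
        have hx : ρv ^ Qn m ≤ 1 := pow_le_one₀ rho_pos.le rho_ub
        have hx0 : 0 ≤ ρv ^ Qn m := pow_nonneg rho_pos.le _
        have h1 : (1 - ρv ^ Qn m) ≤ Real.exp (-(ρv ^ Qn m)) := by
          have := Real.add_one_le_exp (-(ρv ^ Qn m))
          linarith
        have h2 : (1 - ρv ^ Qn m)^(Nc m) ≤ Real.exp (-(ρv ^ Qn m))^(Nc m) :=
          pow_le_pow_left₀ (by linarith) h1 _
        have h3 : Real.exp (-(ρv ^ Qn m))^(Nc m) = Real.exp (-((Nc m : ℝ) * ρv ^ Qn m)) := by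
          rw [← Real.exp_nat_mul]
          congr 1
          ring
        have h4 : (4:ℝ) ≤ (Nc m : ℝ) * ρv ^ Qn m := by
          have hNc : (Nc m : ℝ) = 4 * 15 ^ Qn m := by
            rw [Nc]; push_cast; ring
          have h5 : (1/15:ℝ) ^ Qn m ≤ ρv ^ Qn m :=
            pow_le_pow_left₀ (by norm_num) rho_lb _
          have h6 : (15:ℝ)^ Qn m * (1/15)^ Qn m = 1 := by
            rw [← mul_pow]
            norm_num
          rw [hNc]
          calc (4:ℝ) = 4 * ((15:ℝ)^ Qn m * (1/15)^ Qn m) := by rw [h6]; ring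
            _ ≤ 4 * ((15:ℝ)^ Qn m * ρv ^ Qn m) := by
                have : (0:ℝ) ≤ (15:ℝ)^ Qn m := by positivity
                nlinarith [h5, this]
            _ = 4 * 15 ^ Qn m * ρv ^ Qn m := by ring
        have h7 : Real.exp (-((Nc m : ℝ) * ρv ^ Qn m)) ≤ Real.exp (-4) :=
          Real.exp_le_exp.mpr (by linarith)
        have h50 : (50:ℝ) ≤ Real.exp 4 := by
          have e1 : (2.718:ℝ) ≤ Real.exp 1 := by linarith [Real.exp_one_gt_d9]
          have e9 : Real.exp 4 = Real.exp 1 ^ 4 := by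
            rw [← Real.exp_nat_mul]; norm_num
          have e2 : (2.718:ℝ)^2 ≤ Real.exp 1 ^2 := by nlinarith
          have e4 : (2.718:ℝ)^4 ≤ Real.exp 1 ^4 := by nlinarith
          rw [e9]; nlinarith
        have h8 : Real.exp (-4 : ℝ) ≤ 1/50 := by
          rw [Real.exp_neg, show (1:ℝ)/50 = (50:ℝ)⁻¹ by norm_num]
          exact inv_anti₀ (by norm_num) h50
        linarith

end VDF7

namespace VDF8
open VDF VDF2 VDF3 VDF4 VDF5 VDF6 VDF7

variable {m : ℕ}

lemma margin (hm : (10:ℝ)^13 ≤ m) :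
    1/sm m + (1/sm m + tau m/4) + lam m/(m:ℝ) ≤ pw m := by
  have hs := sm_pos hm
  have hm0 : (0:ℝ) < m := by norm_num at hm ⊢; linarith
  have hb : lam m / (m:ℝ) = 0.01 / sm m := by
    unfold lam
    rw [← sm_sq hm]
    field_simp
    ring
  have hws : wv m * sm m = 9 - 6 * (s3 * tau m) := by
    unfold wv
    linear_combination (3/2 - s3 * tau m) * (tau_sm hm)
  have hA : (2.58:ℝ)/sm m ≤ wv m/(2*s3) := by
    rw [div_le_div_iff₀ hs two_s3_pos]
    nlinarith [s3_ub, s3_pos, tau_le hm, tau_pos hm, hws]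
  have hC : tau m/4 = 1.5/sm m := by unfold tau; ring
  unfold pw
  rw [hb, hC]
  have e1 : (1:ℝ)/sm m + (1/sm m + 1.5/sm m) + 0.01/sm m = 3.51/sm m := by ring
  have e3 : (3.51:ℝ)/sm m ≤ 3.58/sm m := (div_le_div_iff_of_pos_right hs).mpr (by norm_num)
  have e2 : (1:ℝ)/sm m + 2.58/sm m = 3.58/sm m := by ring
  linarith

lemma capture (hm : (10:ℝ)^13 ≤ m) (ω : Fin m → Fin (dd m) → ℝ)
    (hω : ω ∈ G12 m ∩ G3 m) :
    ∃ j : Fin (Nc m),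
      (1:ℝ)/sm m ≤ empCDF (fun i => dotp (ω i) (xv m j)) (t0v m) -
        cdfOf (unifCube (dd m)) (fun v => dotp v (xv m j)) (t0v m) := by
  classical
  obtain ⟨h12, j, hj⟩ := hω
  refine ⟨j, ?_⟩
  have hs := sm_pos hm
  have hm0 : (0:ℝ) < m := by norm_num at hm ⊢; linarith
  have hcount : qc m (col0 m ω) ≤
      (Finset.univ.filter fun i => dotp (ω i) (xv m j) ≤ t0v m).card := by
    apply Finset.card_le_card
    intro i hi
    rw [Finset.mem_filter] at hi ⊢
    refine ⟨hi.1, ?_⟩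
    have h1 : ω i 0 ≤ rr m := hi.2
    have h2 : (3:ℝ)/2 ≤ ω i j.succ := hj i h1
    rw [dotp_le_iff hm]
    have h3 : tau m * (3/2) ≤ tau m * ω i j.succ :=
      mul_le_mul_of_nonneg_left h2 (tau_pos hm).le
    have h4 : rr m - tau m * (3/2) = t0v m - s3 * tau m^2 := by
      unfold rr wv; ring
    have h5 := Tt_ge hm
    linarith
  have hq : (m:ℝ) * pw m - lam m < (qc m (col0 m ω) : ℝ) := by
    rw [G12, mem_setOf_eq] at h12
    nlinarith [lam_pos hm,
      sq_nonneg ((qc m (col0 m ω):ℝ) - (m:ℝ)*pw m + lam m)]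
  have hemp : pw m - lam m/(m:ℝ) ≤ empCDF (fun i => dotp (ω i) (xv m j)) (t0v m) := by
    unfold empCDF
    have h1 : (qc m (col0 m ω) : ℝ) ≤
        ((Finset.univ.filter fun i => dotp (ω i) (xv m j) ≤ t0v m).card : ℝ) := by
      exact_mod_cast hcount
    rw [le_div_iff₀ hm0]
    have e : (pw m - lam m/(m:ℝ)) * m = (m:ℝ) * pw m - lam m := by
      field_simp
    linarith
  have hcdf := cdf_ub hm j
  have hmar := margin hm
  linarith

end VDF8

namespace VDF9
open VDF VDF2 VDF3 VDF4 VDF5 VDF6 VDF7 VDF8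

variable {m : ℕ}

lemma Nc_pos : 0 < Nc m := by unfold Nc; positivity

def j0 (m : ℕ) : Fin (Nc m) := ⟨0, Nc_pos⟩

noncomputable def Afin (m : ℕ) : Finset (Fin (dd m) → ℝ) :=
  Finset.image (xv m) Finset.univ

lemma mem_Afin (j : Fin (Nc m)) : xv m j ∈ Afin m := by
  unfold Afin
  exact Finset.mem_image_of_mem _ (Finset.mem_univ j)

lemma Afin_card : (Afin m).card ≤ Nc m := by
  unfold Afin
  exact le_trans (Finset.card_image_le) (by simp)

lemma mem_Afin_iff {x : Fin (dd m) → ℝ} (hx : x ∈ Afin m) : ∃ j, xv m j = x := by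
  unfold Afin at hx
  obtain ⟨j, _, hj⟩ := Finset.mem_image.mp hx
  exact ⟨j, hj⟩

lemma euclDist_self' (x : Fin (dd m) → ℝ) : euclDist x x = 0 := by
  unfold euclDist; simp

lemma euclDist_nonneg' (x y : Fin (dd m) → ℝ) : 0 ≤ euclDist x y := Real.sqrt_nonneg _

def Mv (m : ℕ) : ℕ := ⌈(21:ℝ) * sm m⌉₊
def s0v (m : ℕ) : ℕ := Nat.log 2 (Mv m) + 1

def Tseq (m : ℕ) : ℕ → Set (Fin (dd m) → ℝ) :=
  fun s => if s < s0v m then {xv m (j0 m)} else ↑(Afin m)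

section G
variable (hm : (10:ℝ)^13 ≤ m)
include hm

lemma Mv_lb : 21 * sm m ≤ (Mv m : ℝ) := Nat.le_ceil _

lemma Mv_ub : (Mv m : ℝ) < 21 * sm m + 1 :=
  Nat.ceil_lt_add_one (by nlinarith [sm_pos hm])

lemma Mv_pos : 0 < Mv m := by
  have h := Mv_lb hm
  have := sm_ge hm
  have : (0:ℝ) < (Mv m : ℝ) := by nlinarith
  exact_mod_cast this

lemma pow_s0_gt : Mv m < 2 ^ s0v m := Nat.lt_pow_succ_log_self (by norm_num) _

lemma pow_s0_le : 2 ^ s0v m ≤ 2 * Mv m := by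
  rw [s0v, pow_succ, mul_comm]
  exact Nat.mul_le_mul_left 2 (Nat.pow_log_le_self 2 (Mv_pos hm).ne')

lemma Nc_le_pow {s : ℕ} (hs : s0v m ≤ s) : Nc m ≤ 2 ^ 2 ^ s := by
  have h1 : Nc m ≤ 2 ^ (4 * Qn m + 2) := by
    unfold Nc
    calc 4 * 15 ^ Qn m ≤ 4 * 16 ^ Qn m := by
          exact Nat.mul_le_mul_left 4 (Nat.pow_le_pow_left (by norm_num) _)
      _ = 2 ^ (4 * Qn m + 2) := by
          rw [show (16:ℕ) = 2^4 from rfl, ← pow_mul, pow_add]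
          ring
  have h2 : 4 * Qn m + 2 ≤ Mv m := by
    have hq := Qn_ub hm
    have hM := Mv_lb hm
    have hsm := sm_ge hm
    have : ((4 * Qn m + 2 : ℕ) : ℝ) ≤ (Mv m : ℝ) := by
      push_cast
      nlinarith
    exact_mod_cast this
  have h3 : 4 * Qn m + 2 ≤ 2 ^ s := by
    calc 4 * Qn m + 2 ≤ Mv m := h2
      _ ≤ 2 ^ s0v m := (pow_s0_gt hm).le
      _ ≤ 2 ^ s := Nat.pow_le_pow_right (by norm_num) hs
  exact le_trans h1 (Nat.pow_le_pow_right (by norm_num) h3)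

lemma Tseq_admissible : IsAdmissible (↑(Afin m) : Set (Fin (dd m) → ℝ)) (Tseq m) := by
  refine ⟨?_, ?_, ?_, ?_, ?_⟩
  · intro s
    unfold Tseq
    split
    · exact Set.singleton_subset_iff.mpr (Finset.mem_coe.mpr (mem_Afin (j0 m)))
    · exact subset_rfl
  · intro s
    unfold Tseq
    split
    · exact Set.finite_singleton _
    · exact (Afin m).finite_toSet
  · intro s
    unfold Tseq
    split
    · exact Set.singleton_nonempty _
    · exact ⟨xv m (j0 m), Finset.mem_coe.mpr (mem_Afin (j0 m))⟩
  · have h0 : 0 < s0v m := Nat.succ_pos _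
    unfold Tseq
    rw [if_pos h0]
    exact Set.ncard_singleton _
  · intro s _
    unfold Tseq
    split
    · rw [Set.ncard_singleton]
      exact Nat.one_le_two_pow
    · next hns =>
      rw [Set.ncard_coe_finset]
      exact le_trans Afin_card (Nc_le_pow hm (not_lt.mp hns))

lemma gamma1_bound : gamma1 euclDist (↑(Afin m) : Set (Fin (dd m) → ℝ)) ≤ 400 := by
  have hs := sm_pos hm
  have h9 : (0:ℝ) ≤ 9 / sm m := by positivity
  apply csInf_le
  · refine ⟨0, fun r hr => ?_⟩
    obtain ⟨T, _, hsum⟩ := hr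
    have := hsum (xv m (j0 m)) (Finset.mem_coe.mpr (mem_Afin (j0 m))) 0
    simpa using this
  · refine ⟨Tseq m, Tseq_admissible hm, ?_⟩
    intro h hh n
    have hterm : ∀ s, (2:ℝ)^s * sInf (euclDist h '' Tseq m s) ≤
        (if s < s0v m then (2:ℝ)^s * (9/sm m) else 0) := by
      intro s
      unfold Tseq
      by_cases hcase : s < s0v m
      · rw [if_pos hcase, if_pos hcase, Set.image_singleton, csInf_singleton]
        apply mul_le_mul_of_nonneg_left _ (by positivity)
        obtain ⟨j, rfl⟩ := mem_Afin_iff hh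
        exact xv_dist hm j (j0 m)
      · rw [if_neg hcase, if_neg hcase]
        have hlb : ∀ y ∈ euclDist h '' (↑(Afin m) : Set (Fin (dd m) → ℝ)), (0:ℝ) ≤ y := by
          rintro y ⟨x, _, rfl⟩
          exact euclDist_nonneg' h x
        have h0mem : (0:ℝ) ∈ euclDist h '' (↑(Afin m) : Set (Fin (dd m) → ℝ)) :=
          ⟨h, hh, euclDist_self' h⟩
        have : sInf (euclDist h '' (↑(Afin m) : Set (Fin (dd m) → ℝ))) = 0 :=
          le_antisymm (csInf_le ⟨0, hlb⟩ h0mem) (le_csInf ⟨0, h0mem⟩ hlb)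
        rw [this, mul_zero]
    calc ∑ s ∈ Finset.range n, (2:ℝ)^s * sInf (euclDist h '' Tseq m s)
        ≤ ∑ s ∈ Finset.range n, (if s < s0v m then (2:ℝ)^s * (9/sm m) else 0) :=
          Finset.sum_le_sum (fun s _ => hterm s)
      _ = ∑ s ∈ (Finset.range n).filter (· < s0v m), (2:ℝ)^s * (9/sm m) :=
          (Finset.sum_filter _ _).symm
      _ ≤ ∑ s ∈ Finset.range (s0v m), (2:ℝ)^s * (9/sm m) := by
          apply Finset.sum_le_sum_of_subset_of_nonneg
          · intro s hs
            rw [Finset.mem_filter] at hs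
            exact Finset.mem_range.mpr hs.2
          · intro s _ _
            positivity
      _ = (∑ s ∈ Finset.range (s0v m), (2:ℝ)^s) * (9/sm m) := by
          rw [Finset.sum_mul]
      _ ≤ (2:ℝ)^(s0v m) * (9/sm m) := by
          apply mul_le_mul_of_nonneg_right _ h9
          have hg := geom_sum_eq (by norm_num : (2:ℝ) ≠ 1) (s0v m)
          rw [hg, show (2:ℝ) - 1 = 1 by norm_num, div_one]
          have : (0:ℝ) < 2 ^ s0v m := by positivity
          linarith
      _ ≤ (43 * sm m) * (9/sm m) := by
          apply mul_le_mul_of_nonneg_right _ h9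
          have h1 : ((2:ℕ) ^ s0v m : ℝ) ≤ ((2 * Mv m : ℕ) : ℝ) := by
            exact_mod_cast pow_s0_le hm
          have h2 : ((2 * Mv m : ℕ) : ℝ) < 2 * (21 * sm m + 1) := by
            push_cast
            nlinarith [Mv_ub hm]
          have h3 : 2 * (21 * sm m + 1) ≤ 43 * sm m := by
            nlinarith [sm_ge hm]
          have h4 : ((2:ℕ) ^ s0v m : ℝ) = (2:ℝ) ^ s0v m := by push_cast; ring
          linarith [h4 ▸ h1]
      _ = 387 := by field_simp; ring
      _ ≤ 400 := by norm_num

end G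
end VDF9

namespace VDF10
open VDF VDF2 VDF3 VDF4 VDF5 VDF6 VDF7 VDF8 VDF9

variable {m : ℕ}

lemma emp_bounds (hm : (10:ℝ)^13 ≤ m) (ω : Fin m → Fin (dd m) → ℝ) (x : Fin (dd m) → ℝ) :
    |empCDF (fun i => dotp (ω i) x) (t0v m) -
      cdfOf (unifCube (dd m)) (fun v => dotp v x) (t0v m)| ≤ 2 := by
  classical
  have hm0 : (0:ℝ) < m := by norm_num at hm ⊢; linarith
  have h1 : 0 ≤ empCDF (fun i => dotp (ω i) x) (t0v m) := by
    unfold empCDF; positivity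
  have h2 : empCDF (fun i => dotp (ω i) x) (t0v m) ≤ 1 := by
    unfold empCDF
    rw [div_le_one hm0]
    have hcl := Finset.card_filter_le (Finset.univ : Finset (Fin m))
      (fun i => dotp (ω i) x ≤ t0v m)
    calc ((Finset.univ.filter fun i => dotp (ω i) x ≤ t0v m).card : ℝ)
        ≤ ((Finset.univ : Finset (Fin m)).card : ℝ) := by exact_mod_cast hcl
      _ = m := by simp
  have h3 : 0 ≤ cdfOf (unifCube (dd m)) (fun v => dotp v x) (t0v m) := ENNReal.toReal_nonneg
  have h4 : cdfOf (unifCube (dd m)) (fun v => dotp v x) (t0v m) ≤ 1 := by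
    unfold cdfOf
    have hp := prob_le_one (μ := unifCube (dd m)) (s := {v | dotp v x ≤ t0v m})
    calc ((unifCube (dd m)) {v | dotp v x ≤ t0v m}).toReal
        ≤ (1 : ENNReal).toReal := ENNReal.toReal_mono (by norm_num) hp
      _ = 1 := by simp
  rw [abs_le]
  constructor <;> linarith

lemma event_incl (hm : (10:ℝ)^13 ≤ m) :
    G12 m ∩ G3 m ⊆ {ω : Fin m → Fin (dd m) → ℝ | 1/sm m ≤
      ⨆ x ∈ (↑(Afin m) : Set (Fin (dd m) → ℝ)),
        |empCDF (fun i => dotp (ω i) x) (t0v m) -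
          cdfOf (unifCube (dd m)) (fun v => dotp v x) (t0v m)|} := by
  intro ω hω
  obtain ⟨j, hj⟩ := capture hm ω hω
  set F := fun x : Fin (dd m) → ℝ => |empCDF (fun i => dotp (ω i) x) (t0v m) -
    cdfOf (unifCube (dd m)) (fun v => dotp v x) (t0v m)| with hF
  have hbdd : BddAbove (Set.range fun x => ⨆ _ : x ∈ (↑(Afin m) : Set (Fin (dd m) → ℝ)), F x) := by
    refine ⟨2, ?_⟩
    rintro y ⟨x, rfl⟩
    exact Real.iSup_le (fun _ => emp_bounds hm ω x) (by norm_num)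
  have hmem : xv m j ∈ (↑(Afin m) : Set (Fin (dd m) → ℝ)) := Finset.mem_coe.mpr (mem_Afin j)
  have step1 : F (xv m j) ≤ ⨆ _ : xv m j ∈ (↑(Afin m) : Set (Fin (dd m) → ℝ)), F (xv m j) := by
    apply le_ciSup (f := fun _ : xv m j ∈ (↑(Afin m) : Set (Fin (dd m) → ℝ)) => F (xv m j)) ?_ hmem
    refine ⟨F (xv m j), ?_⟩
    rintro y ⟨_, rfl⟩
    exact le_rfl
  have step2 : (⨆ _ : xv m j ∈ (↑(Afin m) : Set (Fin (dd m) → ℝ)), F (xv m j)) ≤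
      ⨆ x ∈ (↑(Afin m) : Set (Fin (dd m) → ℝ)), F x := le_ciSup hbdd (xv m j)
  have hstart : 1/sm m ≤ F (xv m j) := le_trans hj (le_abs_self _)
  exact le_trans hstart (le_trans step1 step2)

lemma prob_bound (hm : (10:ℝ)^13 ≤ m) :
    ENNReal.ofReal 0.9 ≤ PP m (dd m) (G12 m ∩ G3 m) := by
  have hu : (univ : Set (Fin m → Fin (dd m) → ℝ)) ⊆
      (G12 m ∩ G3 m) ∪ ((G12 m)ᶜ ∪ (G12 m ∩ (G3 m)ᶜ)) := by
    intro ω _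
    by_cases h1 : ω ∈ G12 m
    · by_cases h2 : ω ∈ G3 m
      · exact Or.inl ⟨h1, h2⟩
      · exact Or.inr (Or.inr ⟨h1, h2⟩)
    · exact Or.inr (Or.inl h1)
  have h1 : (1 : ENNReal) ≤ PP m (dd m) (G12 m ∩ G3 m) +
      (ENNReal.ofReal (1/25) + ENNReal.ofReal (1/50)) := by
    calc (1:ENNReal) = PP m (dd m) univ := (measure_univ).symm
      _ ≤ PP m (dd m) ((G12 m ∩ G3 m) ∪ ((G12 m)ᶜ ∪ (G12 m ∩ (G3 m)ᶜ))) := measure_mono hu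
      _ ≤ PP m (dd m) (G12 m ∩ G3 m) + PP m (dd m) ((G12 m)ᶜ ∪ (G12 m ∩ (G3 m)ᶜ)) :=
          measure_union_le _ _
      _ ≤ PP m (dd m) (G12 m ∩ G3 m) +
          (PP m (dd m) (G12 m)ᶜ + PP m (dd m) (G12 m ∩ (G3 m)ᶜ)) := by
          gcongr
          exact measure_union_le _ _
      _ ≤ PP m (dd m) (G12 m ∩ G3 m) + (ENNReal.ofReal (1/25) + ENNReal.ofReal (1/50)) := by
          gcongr
          · exact G12_compl_bound hm
          · exact patterns_bound hm
  have h2 : ENNReal.ofReal 0.9 + (ENNReal.ofReal (1/25) + ENNReal.ofReal (1/50)) ≤ 1 := by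
    rw [← ENNReal.ofReal_add (by norm_num) (by norm_num),
        ← ENNReal.ofReal_add (by norm_num) (by norm_num)]
    calc ENNReal.ofReal (0.9 + (1/25 + 1/50)) = ENNReal.ofReal 0.96 := by norm_num
      _ ≤ 1 := by
          rw [show (1:ENNReal) = ENNReal.ofReal 1 by simp]
          exact ENNReal.ofReal_le_ofReal (by norm_num)
  have h3 := le_trans h2 h1
  have hfin : (ENNReal.ofReal (1/25) + ENNReal.ofReal (1/50)) ≠ ⊤ := by
    simp [ENNReal.ofReal_ne_top]
  exact (ENNReal.add_le_add_iff_right hfin).mp h3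

end VDF10


open VDF VDF2 VDF3 VDF4 VDF5 VDF6 VDF7 VDF8 VDF9 VDF10 in
/-- **Lemma 4.1**: failure of a variance-dependent DKW inequality. There are constants
`c₁, …, c₅ > 0` such that for every `m ≥ c₁` there are `d ∈ ℕ`, `A ⊆ S^{d-1}` with
`γ₁(A) ≤ c₂`, and `t₀ ∈ ℝ` such that, for `X` uniformly distributed on `[-√3,√3]^d`,
`σ_x²(t₀) ∈ [c₃/√m, c₄/√m]` for every `x ∈ A`, and with probability at least `0.9`,
`sup_{x ∈ A} |F_{m,x}(t₀) − F_x(t₀)| ≥ c₅/√m`. -/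
theorem variance_dependent_fails :
    ∃ c₁ c₂ c₃ c₄ c₅ : ℝ, 0 < c₁ ∧ 0 < c₂ ∧ 0 < c₃ ∧ 0 < c₄ ∧ 0 < c₅ ∧
      ∀ m : ℕ, c₁ ≤ m →
        ∃ (d : ℕ) (A : Set (Fin d → ℝ)) (t₀ : ℝ),
          A ⊆ unitSphere d ∧ gamma1 euclDist A ≤ c₂ ∧
          (∀ x ∈ A,
            c₃ / Real.sqrt m ≤
              cdfOf (unifCube d) (fun v => dotp v x) t₀ *
                (1 - cdfOf (unifCube d) (fun v => dotp v x) t₀) ∧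
            cdfOf (unifCube d) (fun v => dotp v x) t₀ *
                (1 - cdfOf (unifCube d) (fun v => dotp v x) t₀) ≤ c₄ / Real.sqrt m) ∧
          ENNReal.ofReal 0.9 ≤
            (Measure.pi fun _ : Fin m => unifCube d)
              {ω | c₅ / Real.sqrt m ≤ ⨆ x ∈ A,
                |empCDF (fun i => dotp (ω i) x) t₀ -
                  cdfOf (unifCube d) (fun v => dotp v x) t₀|} := by
  classical
  refine ⟨(10:ℝ)^13, 400, 1/8, 3, 1, by norm_num, by norm_num, by norm_num, by norm_num,
    by norm_num, ?_⟩
  intro m hm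
  refine ⟨dd m, (↑(Afin m) : Set (Fin (dd m) → ℝ)), t0v m, ?_, ?_, ?_, ?_⟩
  · -- A ⊆ unit sphere
    intro x hx
    obtain ⟨j, rfl⟩ := mem_Afin_iff (Finset.mem_coe.mp hx)
    exact xv_sphere hm j
  · exact gamma1_bound hm
  · -- variance bounds
    intro x hx
    obtain ⟨j, rfl⟩ := mem_Afin_iff (Finset.mem_coe.mp hx)
    have hs := sm_pos hm
    have hsge := sm_ge hm
    set p := cdfOf (unifCube (dd m)) (fun v => dotp v (xv m j)) (t0v m) with hp
    have hp1 : 0.45/sm m ≤ p := cdf_lb hm j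
    have hp2 : p ≤ 1/sm m + tau m/4 := cdf_ub hm j
    have hC : tau m/4 = 1.5/sm m := by unfold VDF3.tau; ring
    have e25 : (1:ℝ)/sm m + 1.5/sm m = 2.5/sm m := by ring
    have hp2' : p ≤ 2.5/sm m := by rw [hC] at hp2; linarith
    have hhalf : p ≤ 1/2 := by
      have h25 : (2.5:ℝ)/sm m ≤ 1/2 := by
        rw [div_le_iff₀ hs]
        nlinarith
      linarith
    have hp0 : (0:ℝ) < 0.45/sm m := div_pos (by norm_num) hs
    constructor
    · show (1/8:ℝ)/sm m ≤ p * (1 - p)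
      have k1 : (0.45/sm m)*(1/2) ≤ p*(1-p) :=
        mul_le_mul hp1 (by linarith) (by norm_num) (by linarith)
      have k2 : (1/8:ℝ)/sm m ≤ (0.45/sm m)*(1/2) := by
        rw [show (0.45/sm m)*(1/2) = 0.225/sm m by ring]
        exact (div_le_div_iff_of_pos_right hs).mpr (by norm_num)
      linarith
    · show p * (1 - p) ≤ (3:ℝ)/sm m
      have k3 : p*(1-p) ≤ p := by nlinarith [sq_nonneg p]
      have k4 : (2.5:ℝ)/sm m ≤ 3/sm m := (div_le_div_iff_of_pos_right hs).mpr (by norm_num)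
      linarith
  · -- probability bound
    have hmeq : (Measure.pi fun _ : Fin m => unifCube (dd m)) = PP m (dd m) := by
      unfold VDF2.PP
      congr 1
      funext _
      exact unifCube_eq_nu _
    rw [hmeq]
    refine le_trans (prob_bound hm) (measure_mono ?_)
    intro ω hω
    exact event_incl hm hω
end
end
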